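/- arXiv:2202.08007 — 6 statements merged into one kernel-verified Lean document; each statement's English description precedes it below -/
import Mathlib

section
/- Conditional covariance identity for MTD models: for a stationary MTD model of order d with relevant lag set Λ, any S ⊆ ⟦-d,-1⟧, any k ∉ S and any x_S ∈ A^S with positive probability, Cov_{x_S}(X_0, m_k(X_k)) = Σ_{j∈Λ\S} λ_j Cov_{x_S}(m_j(X_j), m_k(X_k)), where Cov_{x_S} denotes covariance conditional on X_S = x_S. -/
open Finset

/-! Given the past, `X_0` may be replaced by its kernel mean
`∑ a, v a * p a x = λ₀ ∑ a, v a * p₀ a + ∑ j ∈ Λ, λ_j m_j (x j)` in any covariance with a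
function of the past such as `m_k (X_k)`. Covariance is linear in its first argument and vanishes
on constants, and the terms with `j ∈ S` drop out because `m_j (X_j)` is constant on `X_S = x_S`. -/

namespace MTD

section Covariance

variable {R : Type*} [CommRing R] [Algebra ℝ R]

def cov (E : R →ₗ[ℝ] ℝ) (f g : R) : ℝ := E (f * g) - E f * E g

theorem cov_algebraMap_add_sum_smul_left {ι : Type*} {E : R →ₗ[ℝ] ℝ} (hE : E 1 = 1) (c : ℝ)
    (s : Finset ι) (a : ι → ℝ) (g : ι → R) (h : R) :
    cov E (algebraMap ℝ R c + ∑ i ∈ s, a i • g i) h = ∑ i ∈ s, a i * cov E (g i) h := by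
  have hmul : E ((algebraMap ℝ R c + ∑ i ∈ s, a i • g i) * h)
      = c * E h + ∑ i ∈ s, a i * E (g i * h) := by
    simp [add_mul, Finset.sum_mul, Algebra.algebraMap_eq_smul_one]
  have hlin : E (algebraMap ℝ R c + ∑ i ∈ s, a i • g i) = c + ∑ i ∈ s, a i * E (g i) := by
    simp [Algebra.algebraMap_eq_smul_one, hE]
  rw [cov, hmul, hlin, add_mul, Finset.sum_mul]
  simp only [cov, mul_sub, Finset.sum_sub_distrib, mul_assoc]
  ring

theorem cov_algebraMap_left {E : R →ₗ[ℝ] ℝ} (hE : E 1 = 1) (c : ℝ) (h : R) :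
    cov E (algebraMap ℝ R c) h = 0 := by
  simpa using cov_algebraMap_add_sum_smul_left hE c (∅ : Finset Unit) 0 0 h

end Covariance

section KernelExpectation

variable {X Y : Type*} [Fintype Y] (F : Finset X) (π : X → ℝ) (p : Y → X → ℝ)

noncomputable def condExp : (X → Y → ℝ) →ₗ[ℝ] ℝ where
  toFun f := (∑ x ∈ F, ∑ a, π x * p a x * f x a) / ∑ x ∈ F, π x
  map_add' f g := by
    simp only [Pi.add_apply, mul_add, Finset.sum_add_distrib, add_div]
  map_smul' c f := by
    simp only [Pi.smul_apply, smul_eq_mul, RingHom.id_apply]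
    rw [mul_div_assoc', Finset.mul_sum]
    congr 1
    refine Finset.sum_congr rfl fun x _ => ?_
    rw [Finset.mul_sum]
    exact Finset.sum_congr rfl fun a _ => by ring

theorem condExp_congr {f f' : X → Y → ℝ} (h : ∀ x ∈ F, f x = f' x) :
    condExp F π p f = condExp F π p f' := by
  simp only [condExp, LinearMap.coe_mk, AddHom.coe_mk]
  congr 1
  exact Finset.sum_congr rfl fun x hx => by rw [h x hx]

variable {p}

theorem condExp_one (hp : ∀ x, ∑ a, p a x = 1) (hZ : ∑ x ∈ F, π x ≠ 0) :
    condExp F π p 1 = 1 := by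
  simp only [condExp, LinearMap.coe_mk, AddHom.coe_mk, Pi.one_apply, mul_one, ← Finset.mul_sum,
    hp, div_self hZ]

theorem condExp_eq_condExp_mean (hp : ∀ x, ∑ a, p a x = 1) (f : X → Y → ℝ) :
    condExp F π p f = condExp F π p (fun x _ => ∑ a, f x a * p a x) := by
  simp only [condExp, LinearMap.coe_mk, AddHom.coe_mk]
  congr 1
  refine Finset.sum_congr rfl fun x _ => ?_
  rw [← Finset.sum_mul, ← Finset.mul_sum, hp, mul_one, Finset.mul_sum]
  exact Finset.sum_congr rfl fun a _ => by ring

theorem cov_condExp_mean_left (hp : ∀ x, ∑ a, p a x = 1) (f : X → Y → ℝ) (g : X → ℝ) :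
    cov (condExp F π p) f (fun x _ => g x)
      = cov (condExp F π p) (fun x _ => ∑ a, f x a * p a x) (fun x _ => g x) := by
  rw [cov, cov, condExp_eq_condExp_mean F π hp (f * _), condExp_eq_condExp_mean F π hp f]
  congr 2
  funext x _
  simp only [Pi.mul_apply, Finset.sum_mul]
  exact Finset.sum_congr rfl fun a _ => mul_right_comm _ _ _

theorem cov_condExp_eq_zero_of_eqOn (hp : ∀ x, ∑ a, p a x = 1) (hZ : ∑ x ∈ F, π x ≠ 0)
    {g : X → ℝ} {c : ℝ} (hg : ∀ x ∈ F, g x = c) (h : X → Y → ℝ) :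
    cov (condExp F π p) (fun x _ => g x) h = 0 := by
  have hgc : ∀ x ∈ F, (fun _ => g x : Y → ℝ) = algebraMap ℝ (X → Y → ℝ) c x := fun x hx => by
    funext a
    simp [hg x hx]
  rw [← cov_algebraMap_left (condExp_one F π hp hZ) c h, cov, cov,
    condExp_congr F π p hgc, condExp_congr F π p (f' := algebraMap ℝ _ c * h) fun x hx => by
      rw [Pi.mul_apply, Pi.mul_apply, hgc x hx]]

end KernelExpectation

section Mixture

variable {ι A : Type*} [Fintype A] {Λ : Finset ι} {lam0 : ℝ} {lam : ι → ℝ} {p0 : A → ℝ}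
  {pj : ι → A → A → ℝ} {p : A → (ι → A) → ℝ}

theorem kernel_mean_eq (hp : ∀ a x, p a x = lam0 * p0 a + ∑ j ∈ Λ, lam j * pj j a (x j))
    (v : A → ℝ) (x : ι → A) :
    ∑ a, v a * p a x = lam0 * ∑ a, v a * p0 a + ∑ j ∈ Λ, lam j * ∑ a, v a * pj j a (x j) := by
  simp only [hp, mul_add, Finset.sum_add_distrib, Finset.mul_sum, mul_left_comm (v _)]
  rw [Finset.sum_comm]

theorem kernel_sum_eq_one (hp : ∀ a x, p a x = lam0 * p0 a + ∑ j ∈ Λ, lam j * pj j a (x j))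
    (hsum : lam0 + ∑ j ∈ Λ, lam j = 1) (hp0sum : ∑ a, p0 a = 1)
    (hpjsum : ∀ j b, ∑ a, pj j a b = 1) (x : ι → A) :
    ∑ a, p a x = 1 := by
  simpa [hp0sum, hpjsum, hsum] using kernel_mean_eq hp (fun _ => 1) x

end Mixture

end MTD

theorem stmt4_general {A : Type*} [Fintype A] [DecidableEq A]
    (d : ℕ) (v : A → ℝ)
    (Λ : Finset (Fin d)) (lam0 : ℝ) (lam : Fin d → ℝ)
    (hsum : lam0 + ∑ j ∈ Λ, lam j = 1)
    (p0 : A → ℝ) (hp0sum : ∑ a, p0 a = 1)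
    (pj : Fin d → A → A → ℝ)
    (hpjsum : ∀ j b, ∑ a, pj j a b = 1)
    (p : A → (Fin d → A) → ℝ)
    (hp : ∀ a x, p a x = lam0 * p0 a + ∑ j ∈ Λ, lam j * pj j a (x j))
    (π : (Fin d → A) → ℝ) (hπ : ∀ x, 0 < π x)
    (m : Fin d → A → ℝ) (hm : ∀ j b, m j b = ∑ a, v a * pj j a b)
    (S : Finset (Fin d)) (k : Fin d) (xS : Fin d → A)
    -- conditional expectation given `X_S = x_S` of a function of `(X_{-d:-1}, X_0)`
    (cE : ((Fin d → A) → A → ℝ) → ℝ)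
    (hcE : ∀ f, cE f =
      (∑ x ∈ Finset.univ.filter (fun x => ∀ i ∈ S, x i = xS i), ∑ a, π x * p a x * f x a) /
      (∑ x ∈ Finset.univ.filter (fun x => ∀ i ∈ S, x i = xS i), π x))
    -- conditional covariance given `X_S = x_S`
    (cCov : ((Fin d → A) → A → ℝ) → ((Fin d → A) → A → ℝ) → ℝ)
    (hcCov : ∀ f g, cCov f g = cE (fun x a => f x a * g x a) - cE f * cE g) :
    cCov (fun _ a => v a) (fun x _ => m k (x k))
      = ∑ j ∈ Λ \ S, lam j * cCov (fun x _ => m j (x j)) (fun x _ => m k (x k)) := by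
  set F := Finset.univ.filter (fun x : Fin d → A => ∀ i ∈ S, x i = xS i)
  set E := MTD.condExp F π p
  have hcov : ∀ f g, cCov f g = MTD.cov E f g := fun f g => by
    rw [hcCov, MTD.cov, hcE, hcE, hcE]
    rfl
  have hmass := MTD.kernel_sum_eq_one hp hsum hp0sum hpjsum
  have hZ : ∑ x ∈ F, π x ≠ 0 := (Finset.sum_pos (fun x _ => hπ x) ⟨xS, by simp [F]⟩).ne'
  have hmean : (fun x _ => ∑ a, v a * p a x : (Fin d → A) → A → ℝ)
      = algebraMap ℝ _ (lam0 * ∑ a, v a * p0 a) + ∑ j ∈ Λ, lam j • fun x _ => m j (x j) := by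
    funext x _
    simp [MTD.kernel_mean_eq hp, hm]
  have hfrozen : ∀ j ∈ S, MTD.cov E (fun x _ => m j (x j)) (fun x _ => m k (x k)) = 0 :=
    fun j hj => MTD.cov_condExp_eq_zero_of_eqOn F π hmass hZ
      (fun x hx => by rw [(Finset.mem_filter.1 hx).2 j hj]) _
  simp only [hcov]
  rw [MTD.cov_condExp_mean_left F π hmass, hmean,
    MTD.cov_algebraMap_add_sum_smul_left (MTD.condExp_one F π hmass hZ)]
  refine (Finset.sum_subset Finset.sdiff_subset fun j hjΛ hj => ?_).symm
  rw [hfrozen j (by simpa [hjΛ] using hj), mul_zero]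

theorem stmt4 {A : Type*} [Fintype A] [DecidableEq A] [Nonempty A]
    (d : ℕ) (v : A → ℝ)
    (Λ : Finset (Fin d)) (lam0 : ℝ) (lam : Fin d → ℝ)
    (hlam0 : 0 ≤ lam0) (hlam : ∀ j, 0 ≤ lam j)
    (hsum : lam0 + ∑ j ∈ Λ, lam j = 1)
    (p0 : A → ℝ) (hp0 : ∀ a, 0 ≤ p0 a) (hp0sum : ∑ a, p0 a = 1)
    (pj : Fin d → A → A → ℝ) (hpj : ∀ j a b, 0 ≤ pj j a b)
    (hpjsum : ∀ j b, ∑ a, pj j a b = 1)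
    (p : A → (Fin d → A) → ℝ)
    (hp : ∀ a x, p a x = lam0 * p0 a + ∑ j ∈ Λ, lam j * pj j a (x j))
    (π : (Fin d → A) → ℝ) (hπ : ∀ x, 0 < π x) (hπsum : ∑ x, π x = 1)
    (m : Fin d → A → ℝ) (hm : ∀ j b, m j b = ∑ a, v a * pj j a b)
    (S : Finset (Fin d)) (k : Fin d) (hk : k ∉ S) (xS : Fin d → A)
    -- conditional expectation given `X_S = x_S` of a function of `(X_{-d:-1}, X_0)`
    (cE : ((Fin d → A) → A → ℝ) → ℝ)
    (hcE : ∀ f, cE f =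
      (∑ x ∈ Finset.univ.filter (fun x => ∀ i ∈ S, x i = xS i), ∑ a, π x * p a x * f x a) /
      (∑ x ∈ Finset.univ.filter (fun x => ∀ i ∈ S, x i = xS i), π x))
    -- conditional covariance given `X_S = x_S`
    (cCov : ((Fin d → A) → A → ℝ) → ((Fin d → A) → A → ℝ) → ℝ)
    (hcCov : ∀ f g, cCov f g = cE (fun x a => f x a * g x a) - cE f * cE g) :
    cCov (fun _ a => v a) (fun x _ => m k (x k))
      = ∑ j ∈ Λ \ S, lam j * cCov (fun x _ => m j (x j)) (fun x _ => m k (x k)) :=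
  stmt4_general d v Λ lam0 lam hsum p0 hp0sum pj hpjsum p hp π hπ m hm S k xS cE hcE cCov hcCov
end

section
/- Under full support and non-degenerate conditional averages, the quadratic form of conditional covariances is strictly positive: for any S ⊆ ⟦-d,-1⟧ with Λ ⊄ S, Σ_{j∈Λ\S} Σ_{k∈Λ\S} λ_j λ_k E[Cov_{X_S}(m_j(X_j), m_k(X_k))] > 0. -/
/-!
Conditional covariance given `X_S` is bilinear, so the quadratic form is the `π`-average of the
conditional variance of `G(x) = ∑_{j ∈ Λ \ S} λ_j m_j(x_j)` on the cylinders `{x_S = y_S}`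
(the MTD transition probabilities sum to one, so they drop out). A weighted variance equals
`∑_{x,y} w_x w_y (G x - G y)² / (2 (∑ w)²)`. Choose `j ∈ Λ \ S` and `b, c` with
`m_j b ≠ m_j c`: resetting coordinate `j` of `y` to `b` or to `c` stays in the cylinder of `y`,
both points have positive weight by full support, and `G` differs on them by
`λ_j (m_j b - m_j c) ≠ 0`. So every conditional variance is positive.
-/

open Finset

namespace Finset

variable {ι κ : Type*}

noncomputable def weightedCov (s : Finset ι) (w f g : ι → ℝ) : ℝ :=
  s.centerMass w (fun x => f x * g x) - s.centerMass w f * s.centerMass w g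

theorem centerMass_sum_mul (s : Finset ι) (w : ι → ℝ) (t : Finset κ) (c : κ → ℝ)
    (F : κ → ι → ℝ) :
    s.centerMass w (fun x => ∑ j ∈ t, c j * F j x) = ∑ j ∈ t, c j * s.centerMass w (F j) := by
  simp only [centerMass, smul_eq_mul, mul_sum]
  rw [sum_comm]
  exact sum_congr rfl fun j _ => sum_congr rfl fun x _ => by ring

theorem sum_sum_mul_weightedCov (s : Finset ι) (w : ι → ℝ) (t : Finset κ) (c : κ → ℝ)
    (F : κ → ι → ℝ) :
    ∑ j ∈ t, ∑ k ∈ t, c j * c k * s.weightedCov w (F j) (F k) =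
      s.weightedCov w (fun x => ∑ j ∈ t, c j * F j x) (fun x => ∑ j ∈ t, c j * F j x) := by
  have hsq : (fun x => (∑ j ∈ t, c j * F j x) * ∑ k ∈ t, c k * F k x) =
      fun x => ∑ j ∈ t, c j * ∑ k ∈ t, c k * (F j x * F k x) := by
    ext x
    rw [sum_mul_sum]
    exact sum_congr rfl fun j _ => by rw [mul_sum]; exact sum_congr rfl fun k _ => by ring
  rw [weightedCov, hsq, centerMass_sum_mul, centerMass_sum_mul, sum_mul_sum, ← sum_sub_distrib]
  refine sum_congr rfl fun j _ => ?_
  rw [centerMass_sum_mul, mul_sum, ← sum_sub_distrib]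
  exact sum_congr rfl fun k _ => by rw [weightedCov]; ring

theorem sum_sum_mul_sum_mul_weightedCov {α : Type*} (u : Finset α) (π : α → ℝ)
    (s : α → Finset ι) (w : ι → ℝ) (t : Finset κ) (c : κ → ℝ) (F : κ → ι → ℝ) :
    ∑ j ∈ t, ∑ k ∈ t, c j * c k * ∑ x ∈ u, π x * (s x).weightedCov w (F j) (F k) =
      ∑ x ∈ u, π x * (s x).weightedCov w (fun z => ∑ j ∈ t, c j * F j z)
        (fun z => ∑ j ∈ t, c j * F j z) := by
  simp only [← sum_sum_mul_weightedCov, mul_sum]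
  refine (sum_congr rfl fun j _ => sum_comm).trans (sum_comm.trans ?_)
  exact sum_congr rfl fun x _ => sum_congr rfl fun j _ => sum_congr rfl fun k _ => by ring

theorem sum_sum_mul_mul_sub_sq (s : Finset ι) (w f : ι → ℝ) :
    ∑ x ∈ s, ∑ y ∈ s, w x * w y * (f x - f y) ^ 2 =
      2 * ((∑ x ∈ s, w x) * ∑ x ∈ s, w x * f x ^ 2 - (∑ x ∈ s, w x * f x) ^ 2) := by
  have hsq_snd : (∑ x ∈ s, w x) * ∑ x ∈ s, w x * f x ^ 2 =
      ∑ x ∈ s, ∑ y ∈ s, w x * w y * f y ^ 2 := by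
    rw [sum_mul_sum]; exact sum_congr rfl fun x _ => sum_congr rfl fun y _ => by ring
  have hsq_fst : (∑ x ∈ s, w x) * ∑ x ∈ s, w x * f x ^ 2 =
      ∑ x ∈ s, ∑ y ∈ s, w x * w y * f x ^ 2 := by
    rw [hsq_snd, sum_comm]; exact sum_congr rfl fun x _ => sum_congr rfl fun y _ => by ring
  have hcross : (∑ x ∈ s, w x * f x) ^ 2 = ∑ x ∈ s, ∑ y ∈ s, w x * w y * (f x * f y) := by
    rw [sq, sum_mul_sum]; exact sum_congr rfl fun x _ => sum_congr rfl fun y _ => by ring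
  have hexpand : ∑ x ∈ s, ∑ y ∈ s, w x * w y * (f x - f y) ^ 2 =
      ∑ x ∈ s, ∑ y ∈ s, w x * w y * f x ^ 2 + ∑ x ∈ s, ∑ y ∈ s, w x * w y * f y ^ 2
        - 2 * ∑ x ∈ s, ∑ y ∈ s, w x * w y * (f x * f y) := by
    simp only [mul_sum, ← sum_add_distrib, ← sum_sub_distrib]
    exact sum_congr rfl fun x _ => sum_congr rfl fun y _ => by ring
  linarith

theorem weightedCov_self_eq (s : Finset ι) (w f : ι → ℝ) :
    s.weightedCov w f f =
      (∑ x ∈ s, ∑ y ∈ s, w x * w y * (f x - f y) ^ 2) / (2 * (∑ x ∈ s, w x) ^ 2) := by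
  rw [sum_sum_mul_mul_sub_sq]
  by_cases hw : ∑ x ∈ s, w x = 0
  · simp [weightedCov, centerMass, hw]
  · simp only [weightedCov, centerMass, smul_eq_mul]
    field_simp

theorem weightedCov_self_pos {s : Finset ι} {w f : ι → ℝ} (hw : ∀ x ∈ s, 0 < w x)
    {x y : ι} (hx : x ∈ s) (hy : y ∈ s) (hf : f x ≠ f y) : 0 < s.weightedCov w f f := by
  rw [weightedCov_self_eq]
  have hterm : ∀ x ∈ s, ∀ y ∈ s, 0 ≤ w x * w y * (f x - f y) ^ 2 := fun x hx y hy =>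
    mul_nonneg (mul_pos (hw x hx) (hw y hy)).le (sq_nonneg _)
  refine div_pos (sum_pos' (fun x hx => sum_nonneg (hterm x hx)) ⟨x, hx, ?_⟩) ?_
  · refine sum_pos' (hterm x hx) ⟨y, hy, ?_⟩
    exact mul_pos (mul_pos (hw x hx) (hw y hy)) (pow_two_pos_of_ne_zero (sub_ne_zero.2 hf))
  · exact mul_pos two_pos (pow_pos (sum_pos (fun x hx => hw x hx) ⟨x, hx⟩) 2)

end Finset

theorem sum_sum_mul_div_sum_eq_centerMass {ι A : Type*} [Fintype A] (s : Finset ι)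
    (π f : ι → ℝ) (p : A → ι → ℝ) (hp : ∀ x, ∑ a, p a x = 1) :
    (∑ x ∈ s, ∑ a, π x * p a x * f x) / ∑ x ∈ s, π x = s.centerMass π f := by
  simp only [← sum_mul, ← mul_sum, hp, mul_one, centerMass, smul_eq_mul, div_eq_inv_mul]

theorem sum_mixture_eq_one {A ι : Type*} [Fintype A] (Λ : Finset ι) (lam0 : ℝ) (lam : ι → ℝ)
    (hsum : lam0 + ∑ j ∈ Λ, lam j = 1) (p0 : A → ℝ) (hp0sum : ∑ a, p0 a = 1)
    (q : ι → A → ℝ) (hqsum : ∀ j, ∑ a, q j a = 1) :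
    ∑ a, (lam0 * p0 a + ∑ j ∈ Λ, lam j * q j a) = 1 := by
  rw [sum_add_distrib, ← mul_sum, sum_comm]
  simp only [← mul_sum, hp0sum, hqsum, mul_one, hsum]

section Cylinder

variable {ι A : Type*} [Fintype ι] [DecidableEq ι] [Fintype A] [DecidableEq A]

-- the event `{X_S = y_S}` that `Cov_{X_S}` conditions on
def cylinder (S : Finset ι) (y : ι → A) : Finset (ι → A) :=
  univ.filter fun x => ∀ i ∈ S, x i = y i

theorem update_mem_cylinder {S : Finset ι} {j : ι} (hj : j ∉ S) (y : ι → A)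
    (b : A) : Function.update y j b ∈ cylinder S y := by
  simp only [cylinder, mem_filter, mem_univ, true_and]
  exact fun i hi => Function.update_of_ne (ne_of_mem_of_not_mem hi hj) _ _

end Cylinder

theorem sum_mul_apply_update_ne {ι A : Type*} [DecidableEq ι] {t : Finset ι} {j : ι}
    (hj : j ∈ t) {c : ι → ℝ} (hc : c j ≠ 0) {F : ι → A → ℝ} {b b' : A} (hF : F j b ≠ F j b')
    (y : ι → A) :
    ∑ i ∈ t, c i * F i (Function.update y j b i) ≠
      ∑ i ∈ t, c i * F i (Function.update y j b' i) := by
  rw [← sub_ne_zero, ← sum_sub_distrib, sum_eq_single_of_mem j hj, Function.update_self,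
    Function.update_self, ← mul_sub]
  · exact mul_ne_zero hc (sub_ne_zero.2 hF)
  · intro i _ hij
    rw [Function.update_of_ne hij, Function.update_of_ne hij, sub_self]

theorem stmt5_general {A : Type*} [Fintype A] [DecidableEq A]
    (d : ℕ)
    (Λ : Finset (Fin d)) (lam0 : ℝ) (lam : Fin d → ℝ)
    (hlampos : ∀ j ∈ Λ, 0 < lam j)
    (hsum : lam0 + ∑ j ∈ Λ, lam j = 1)
    (p0 : A → ℝ) (hp0sum : ∑ a, p0 a = 1)
    (pj : Fin d → A → A → ℝ)
    (hpjsum : ∀ j b, ∑ a, pj j a b = 1)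
    (p : A → (Fin d → A) → ℝ)
    (hp : ∀ a x, p a x = lam0 * p0 a + ∑ j ∈ Λ, lam j * pj j a (x j))
    -- full support of the law of the past
    (π : (Fin d → A) → ℝ) (hπ : ∀ x, 0 < π x)
    (m : Fin d → A → ℝ)
    -- non-degenerate conditional averages
    (hmnondeg : ∀ j ∈ Λ, ∃ b c, m j b ≠ m j c)
    (S : Finset (Fin d)) (hS : ¬ Λ ⊆ S)
    -- conditional expectation given the `S`-pattern of `y`
    (cE : (Fin d → A) → ((Fin d → A) → A → ℝ) → ℝ)
    (hcE : ∀ y f, cE y f =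
      (∑ x ∈ Finset.univ.filter (fun x => ∀ i ∈ S, x i = y i), ∑ a, π x * p a x * f x a) /
      (∑ x ∈ Finset.univ.filter (fun x => ∀ i ∈ S, x i = y i), π x))
    (cCov : (Fin d → A) → ((Fin d → A) → A → ℝ) → ((Fin d → A) → A → ℝ) → ℝ)
    (hcCov : ∀ y f g, cCov y f g = cE y (fun x a => f x a * g x a) - cE y f * cE y g) :
    0 < ∑ j ∈ Λ \ S, ∑ k ∈ Λ \ S, lam j * lam k *
        (∑ x, π x * cCov x (fun z _ => m j (z j)) (fun z _ => m k (z k))) := by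
  obtain ⟨j, hjΛ, hjS⟩ := not_subset.mp hS
  obtain ⟨b, c, hbc⟩ := hmnondeg j hjΛ
  have hpsum (x : Fin d → A) : ∑ a, p a x = 1 := by
    simp only [hp]
    exact sum_mixture_eq_one Λ lam0 lam hsum p0 hp0sum _ fun j => hpjsum j (x j)
  have hcE_const (y : Fin d → A) (f : (Fin d → A) → ℝ) :
      cE y (fun z _ => f z) = (cylinder S y).centerMass π f := by
    -- the two filters differ in their decidability instances
    have hcyl : univ.filter (fun x => ∀ i ∈ S, x i = y i) = cylinder S y := by
      ext x; simp [cylinder]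
    simp only [hcE, hcyl]
    exact sum_sum_mul_div_sum_eq_centerMass _ _ _ _ hpsum
  have hcCov_const (y : Fin d → A) (f g : (Fin d → A) → ℝ) :
      cCov y (fun z _ => f z) (fun z _ => g z) = (cylinder S y).weightedCov π f g := by
    simp only [hcCov, hcE_const, weightedCov]
  simp only [hcCov_const, sum_sum_mul_sum_mul_weightedCov]
  refine sum_pos (fun x _ => mul_pos (hπ x) ?_) ⟨fun _ => b, mem_univ _⟩
  exact weightedCov_self_pos (fun z _ => hπ z) (update_mem_cylinder hjS x b)
    (update_mem_cylinder hjS x c)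
    (sum_mul_apply_update_ne (mem_sdiff.2 ⟨hjΛ, hjS⟩) (hlampos j hjΛ).ne' hbc x)

theorem stmt5 {A : Type*} [Fintype A] [DecidableEq A] [Nonempty A]
    (d : ℕ) (v : A → ℝ)
    (Λ : Finset (Fin d)) (lam0 : ℝ) (lam : Fin d → ℝ)
    (hlam0 : 0 ≤ lam0) (hlam : ∀ j, 0 ≤ lam j)
    (hlampos : ∀ j ∈ Λ, 0 < lam j)
    (hsum : lam0 + ∑ j ∈ Λ, lam j = 1)
    (p0 : A → ℝ) (hp0 : ∀ a, 0 ≤ p0 a) (hp0sum : ∑ a, p0 a = 1)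
    (pj : Fin d → A → A → ℝ) (hpj : ∀ j a b, 0 ≤ pj j a b)
    (hpjsum : ∀ j b, ∑ a, pj j a b = 1)
    (p : A → (Fin d → A) → ℝ)
    (hp : ∀ a x, p a x = lam0 * p0 a + ∑ j ∈ Λ, lam j * pj j a (x j))
    -- full support of the law of the past
    (π : (Fin d → A) → ℝ) (hπ : ∀ x, 0 < π x) (hπsum : ∑ x, π x = 1)
    (m : Fin d → A → ℝ) (hm : ∀ j b, m j b = ∑ a, v a * pj j a b)
    -- non-degenerate conditional averages
    (hmnondeg : ∀ j ∈ Λ, ∃ b c, m j b ≠ m j c)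
    (S : Finset (Fin d)) (hS : ¬ Λ ⊆ S)
    -- conditional expectation given the `S`-pattern of `y`
    (cE : (Fin d → A) → ((Fin d → A) → A → ℝ) → ℝ)
    (hcE : ∀ y f, cE y f =
      (∑ x ∈ Finset.univ.filter (fun x => ∀ i ∈ S, x i = y i), ∑ a, π x * p a x * f x a) /
      (∑ x ∈ Finset.univ.filter (fun x => ∀ i ∈ S, x i = y i), π x))
    (cCov : (Fin d → A) → ((Fin d → A) → A → ℝ) → ((Fin d → A) → A → ℝ) → ℝ)
    (hcCov : ∀ y f g, cCov y f g = cE y (fun x a => f x a * g x a) - cE y f * cE y g) :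
    0 < ∑ j ∈ Λ \ S, ∑ k ∈ Λ \ S, lam j * lam k *
        (∑ x, π x * cCov x (fun z _ => m j (z j)) (fun z _ => m k (z k))) :=
  stmt5_general d Λ lam0 lam hlampos hsum p0 hp0sum pj hpjsum p hp π hπ m hmnondeg S hS cE hcE cCov
    hcCov
end

section
/- For a stationary MTD model, for any lag k ∈ ⟦-d,-1⟧ and subset S ⊆ ⟦-d,-1⟧\{k}, Diam(A)·‖A‖_∞·ν̄_{k,S} ≥ E[|Cov_{X_S}(X_0, X_k)|], where ν̄_{k,S} = E[Σ_{b,c∈A} P_{X_S}(X_k=b) P_{X_S}(X_k=c) d_TV(P_{X_S}(X_0 ∈ ·|X_k=b), P_{X_S}(X_0 ∈ ·|X_k=c))]. -/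
/-!
Condition on `X_S` and decompose along the value `b` of `X_k`: writing `p_b` for the conditional
probability of `X_k = b` and `E_b` for the conditional mean of `X_0` given `X_k = b`, the
conditional covariance is `∑_{b,c} p_b p_c v_b (E_b - E_c)`. The conditional laws of `X_0` given
`X_k = b` and `X_k = c` have equal mass, so recentring `v` at the midpoint of its range gives
`|E_b - E_c| ≤ Diam(A) d_TV`, while `|v_b| ≤ ‖A‖_∞`. Averaging over `X_S` gives the theorem.
-/

open Finset

lemma exists_forall_abs_sub_le_half {ι : Type*} [Finite ι] [Nonempty ι] (v : ι → ℝ) {M : ℝ}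
    (hv : ∀ a b, |v a - v b| ≤ M) : ∃ c, ∀ a, |v a - c| ≤ M / 2 := by
  obtain ⟨amax, hmax⟩ := Finite.exists_max v
  obtain ⟨amin, hmin⟩ := Finite.exists_min v
  refine ⟨(v amax + v amin) / 2, fun a => abs_le.mpr ⟨?_, ?_⟩⟩ <;>
    linarith [hmax a, hmin a, le_abs_self (v amax - v amin), hv amax amin]

noncomputable def tvDist {ι : Type*} [Fintype ι] (p q : ι → ℝ) : ℝ :=
  (1 / 2 : ℝ) * ∑ a, |p a - q a|

lemma abs_sum_sub_mul_le_mul_tvDist {ι : Type*} [Fintype ι] [Nonempty ι] {p q v : ι → ℝ} {M : ℝ}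
    (hv : ∀ a b, |v a - v b| ≤ M) (hpq : ∑ a, p a = ∑ a, q a) :
    |∑ a, (p a - q a) * v a| ≤ M * tvDist p q := by
  obtain ⟨c, hc⟩ := exists_forall_abs_sub_le_half v hv
  -- the total mass of `p - q` vanishes, so `v` may be recentred at the midpoint `c` of its range
  have hcentre : ∑ a, (p a - q a) * v a = ∑ a, (p a - q a) * (v a - c) := by
    simp only [mul_sub, sum_sub_distrib, ← sum_mul, hpq, sub_self, zero_mul, sub_zero]
  calc |∑ a, (p a - q a) * v a| ≤ ∑ a, |p a - q a| * |v a - c| := by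
        rw [hcentre]; exact (abs_sum_le_sum_abs _ _).trans_eq (by simp only [abs_mul])
    _ ≤ ∑ a, |p a - q a| * (M / 2) := by gcongr with a; exact hc a
    _ = M * tvDist p q := by rw [tvDist, ← sum_mul]; ring

lemma covariance_eq_sum_sum_mul_sub {ι : Type*} [Fintype ι] {p f g : ι → ℝ}
    (hp : ∑ b, p b = 1) :
    ∑ b, p b * (g b * f b) - (∑ b, p b * f b) * (∑ b, p b * g b)
      = ∑ b, ∑ c, p b * p c * (g b * (f b - f c)) := by
  simp only [mul_sub, sum_sub_distrib]
  congr 1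
  · refine sum_congr rfl fun b _ => ?_
    rw [← sum_mul, ← mul_sum, hp, mul_one]
  · rw [mul_comm, sum_mul_sum]
    exact sum_congr rfl fun b _ => sum_congr rfl fun c _ => by ring

-- `W x a` is an unnormalised joint weight of a state `x` (the past) and a symbol `a` (the present);
-- conditioning on an event `P` of states renormalises by `mass W P`, and `κ` reads off `X_k`.
namespace Weighted

variable {X A : Type*} [Fintype X] [Fintype A] (W : X → A → ℝ)

noncomputable def mass (P : X → Prop) [DecidablePred P] : ℝ :=
  ∑ x ∈ univ.filter P, ∑ a, W x a

noncomputable def condExp (P : X → Prop) [DecidablePred P] (f : X → A → ℝ) : ℝ :=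
  (∑ x ∈ univ.filter P, ∑ a, W x a * f x a) / mass W P

noncomputable def condCov (P : X → Prop) [DecidablePred P] (f g : X → A → ℝ) : ℝ :=
  condExp W P (fun x a => f x a * g x a) - condExp W P f * condExp W P g

variable [DecidableEq A] (P : X → Prop) [DecidablePred P] (κ : X → A)

noncomputable def condProb (b : A) : ℝ :=
  mass W (fun x => P x ∧ κ x = b) / mass W P

noncomputable def condLaw (b a : A) : ℝ :=
  (∑ x ∈ univ.filter (fun x => P x ∧ κ x = b), W x a) / mass W (fun x => P x ∧ κ x = b)

lemma sum_fiberwise_and (F : X → ℝ) :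
    ∑ b, ∑ x ∈ univ.filter (fun x => P x ∧ κ x = b), F x = ∑ x ∈ univ.filter P, F x := by
  rw [← sum_fiberwise (univ.filter P) κ F]
  simp only [filter_filter]

lemma sum_mass_fiberwise : ∑ b, mass W (fun x => P x ∧ κ x = b) = mass W P :=
  sum_fiberwise_and P κ _

variable {W P κ}

lemma mass_pos [Nonempty A] (hN : ∀ b, 0 < mass W (fun x => P x ∧ κ x = b)) : 0 < mass W P := by
  rw [← sum_mass_fiberwise W P κ]; exact sum_pos (fun b _ => hN b) univ_nonempty

lemma sum_condLaw (hN : ∀ b, 0 < mass W (fun x => P x ∧ κ x = b)) (b : A) :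
    ∑ a, condLaw W P κ b a = 1 := by
  simp only [condLaw]
  rw [← sum_div, sum_comm]
  exact div_self (hN b).ne'

lemma condProb_nonneg [Nonempty A] (hN : ∀ b, 0 < mass W (fun x => P x ∧ κ x = b)) (b : A) :
    0 ≤ condProb W P κ b :=
  div_nonneg (hN b).le (mass_pos hN).le

lemma sum_condProb [Nonempty A] (hN : ∀ b, 0 < mass W (fun x => P x ∧ κ x = b)) :
    ∑ b, condProb W P κ b = 1 := by
  simp only [condProb]
  rw [← sum_div, sum_mass_fiberwise, div_self (mass_pos hN).ne']

lemma condProb_mul_condLaw (hN : ∀ b, 0 < mass W (fun x => P x ∧ κ x = b)) (b a : A) :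
    condProb W P κ b * condLaw W P κ b a
      = (∑ x ∈ univ.filter (fun x => P x ∧ κ x = b), W x a) / mass W P := by
  simp only [condProb, condLaw]
  field_simp [(hN b).ne']

lemma condExp_eq_sum_condProb_mul (hN : ∀ b, 0 < mass W (fun x => P x ∧ κ x = b))
    (h : A → A → ℝ) :
    condExp W P (fun x a => h (κ x) a)
      = ∑ b, condProb W P κ b * ∑ a, condLaw W P κ b a * h b a := by
  have hfiber : ∑ x ∈ univ.filter P, ∑ a, W x a * h (κ x) a
      = ∑ b, ∑ a, (∑ x ∈ univ.filter (fun x => P x ∧ κ x = b), W x a) * h b a := by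
    rw [← sum_fiberwise_and P κ]
    refine sum_congr rfl fun b _ => ?_
    rw [sum_comm]
    simp only [sum_mul]
    exact sum_congr rfl fun a _ => sum_congr rfl fun x hx => by rw [(mem_filter.mp hx).2.2]
  simp only [mul_sum, ← mul_assoc, condProb_mul_condLaw hN, div_mul_eq_mul_div, ← sum_div]
  rw [condExp, hfiber]

theorem abs_condCov_le [Nonempty A] (hN : ∀ b, 0 < mass W (fun x => P x ∧ κ x = b))
    {v : A → ℝ} {M L : ℝ} (hM : ∀ a b, |v a - v b| ≤ M) (hL : ∀ a, |v a| ≤ L) :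
    |condCov W P (fun _ a => v a) (fun x _ => v (κ x))|
      ≤ M * L * ∑ b, ∑ c, condProb W P κ b * condProb W P κ c *
          tvDist (condLaw W P κ b) (condLaw W P κ c) := by
  set p := condProb W P κ
  set E := fun b => ∑ a, condLaw W P κ b a * v a
  have hcov : condCov W P (fun _ a => v a) (fun x _ => v (κ x))
      = ∑ b, p b * (v b * E b) - (∑ b, p b * E b) * (∑ b, p b * v b) := by
    have h1 := condExp_eq_sum_condProb_mul hN (fun _ a => v a)
    have h2 := condExp_eq_sum_condProb_mul hN (fun b _ => v b)
    have h3 := condExp_eq_sum_condProb_mul hN (fun b a => v a * v b)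
    simp only [← sum_mul, sum_condLaw hN, one_mul] at h2
    simp only [← mul_assoc, ← sum_mul] at h3
    rw [condCov, h1, h2, h3]
    congr 1
    exact sum_congr rfl fun b _ => by ring
  have hterm : ∀ b c, |p b * p c * (v b * (E b - E c))|
      ≤ M * L * (p b * p c * tvDist (condLaw W P κ b) (condLaw W P κ c)) := by
    intro b c
    have hE : |E b - E c| ≤ M * tvDist (condLaw W P κ b) (condLaw W P κ c) := by
      simp only [E, ← sum_sub_distrib, ← sub_mul]
      exact abs_sum_sub_mul_le_mul_tvDist hM (by rw [sum_condLaw hN, sum_condLaw hN])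
    have hp : ∀ b, 0 ≤ p b := condProb_nonneg hN
    rw [abs_mul, abs_mul, abs_mul, abs_of_nonneg (hp b), abs_of_nonneg (hp c)]
    calc p b * p c * (|v b| * |E b - E c|)
        ≤ p b * p c * (L * (M * tvDist (condLaw W P κ b) (condLaw W P κ c))) :=
          mul_le_mul_of_nonneg_left
            (mul_le_mul (hL b) hE (abs_nonneg _) ((abs_nonneg _).trans (hL b)))
            (mul_nonneg (hp b) (hp c))
      _ = _ := by ring
  rw [hcov, covariance_eq_sum_sum_mul_sub (sum_condProb hN), mul_sum]
  refine (abs_sum_le_sum_abs _ _).trans (sum_le_sum fun b _ => ?_)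
  rw [mul_sum]
  exact (abs_sum_le_sum_abs _ _).trans (sum_le_sum fun c _ => hterm b c)

end Weighted

-- `W x a` is the joint law of the past `X_{-d:-1} = x` and the present `X_0 = a`, and `v`
-- gives the real value of each symbol.
theorem stmt9_general {A : Type*} [Fintype A] [DecidableEq A] [Nonempty A]
    (d : ℕ) (v : A → ℝ)
    (W : (Fin d → A) → A → ℝ) (hW : ∀ x a, 0 < W x a)
    (π : (Fin d → A) → ℝ) (hπ : ∀ x, π x = ∑ a, W x a)
    (S : Finset (Fin d)) (k : Fin d) (hk : k ∉ S)
    -- conditional probability that `X_k = b` given the `S`-pattern of `y`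
    (Pk : (Fin d → A) → A → ℝ)
    (hPk : ∀ y b, Pk y b =
      (∑ x ∈ Finset.univ.filter (fun x => (∀ i ∈ S, x i = y i) ∧ x k = b), π x) /
      (∑ x ∈ Finset.univ.filter (fun x => ∀ i ∈ S, x i = y i), π x))
    -- conditional law of `X_0` given the `S`-pattern of `y` and `X_k = b`
    (law : (Fin d → A) → A → A → ℝ)
    (hlaw : ∀ y b a, law y b a =
      (∑ x ∈ Finset.univ.filter (fun x => (∀ i ∈ S, x i = y i) ∧ x k = b), W x a) /
      (∑ x ∈ Finset.univ.filter (fun x => (∀ i ∈ S, x i = y i) ∧ x k = b), π x))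
    -- conditional influence measure ν
    (ν : (Fin d → A) → ℝ)
    (hν : ∀ y, ν y = ∑ b, ∑ c, Pk y b * Pk y c *
      ((1/2 : ℝ) * ∑ a, |law y b a - law y c a|))
    -- conditional expectation and covariance given the `S`-pattern of `y`
    (cE : (Fin d → A) → ((Fin d → A) → A → ℝ) → ℝ)
    (hcE : ∀ y f, cE y f =
      (∑ x ∈ Finset.univ.filter (fun x => ∀ i ∈ S, x i = y i), ∑ a, W x a * f x a) /
      (∑ x ∈ Finset.univ.filter (fun x => ∀ i ∈ S, x i = y i), π x))
    (cCov : (Fin d → A) → ((Fin d → A) → A → ℝ) → ((Fin d → A) → A → ℝ) → ℝ)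
    (hcCov : ∀ y f g, cCov y f g = cE y (fun x a => f x a * g x a) - cE y f * cE y g) :
    ∑ x, π x * |cCov x (fun _ a => v a) (fun z _ => v (z k))|
      ≤ ((Finset.univ : Finset (A × A)).sup' Finset.univ_nonempty
            (fun ab => |v ab.1 - v ab.2|)) *
        (Finset.univ.sup' Finset.univ_nonempty (fun a => |v a|)) *
        (∑ x, π x * ν x) := by
  set Diam := (univ : Finset (A × A)).sup' univ_nonempty (fun ab => |v ab.1 - v ab.2|)
  set Sup := univ.sup' univ_nonempty (fun a => |v a|)
  have hDiam : ∀ a b, |v a - v b| ≤ Diam := fun a b =>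
    le_sup' (fun ab : A × A => |v ab.1 - v ab.2|) (mem_univ (a, b))
  have hSup : ∀ a, |v a| ≤ Sup := fun a => le_sup' (fun a => |v a|) (mem_univ a)
  have hπ0 : ∀ x, 0 ≤ π x := fun x => (hπ x).symm ▸ sum_nonneg fun a _ => (hW x a).le
  have hN : ∀ (y : Fin d → A) b,
      0 < Weighted.mass W (fun x : Fin d → A => (∀ i ∈ S, x i = y i) ∧ x k = b) := by
    intro y b
    refine sum_pos (fun x _ => sum_pos (fun a _ => hW x a) univ_nonempty)
      ⟨Function.update y k b, mem_filter.mpr ⟨mem_univ _, fun i hi => ?_, Function.update_self ..⟩⟩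
    exact Function.update_of_ne (ne_of_mem_of_not_mem hi hk) _ _
  have hcov : ∀ y, |cCov y (fun _ a => v a) (fun z _ => v (z k))| ≤ Diam * Sup * ν y := by
    intro y
    rw [hcCov, hcE, hcE, hcE, hν]
    simp only [hPk, hlaw, hπ]
    exact Weighted.abs_condCov_le (hN y) hDiam hSup
  calc ∑ x, π x * |cCov x (fun _ a => v a) (fun z _ => v (z k))|
      ≤ ∑ x, π x * (Diam * Sup * ν x) :=
        sum_le_sum fun x _ => mul_le_mul_of_nonneg_left (hcov x) (hπ0 x)
    _ = Diam * Sup * ∑ x, π x * ν x := by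
        rw [mul_sum]; exact sum_congr rfl fun x _ => by ring

theorem stmt9 {A : Type*} [Fintype A] [DecidableEq A] [Nonempty A]
    (d : ℕ) (v : A → ℝ)
    (W : (Fin d → A) → A → ℝ) (hW : ∀ x a, 0 < W x a)
    (hWsum : ∑ x, ∑ a, W x a = 1)
    (π : (Fin d → A) → ℝ) (hπ : ∀ x, π x = ∑ a, W x a)
    (S : Finset (Fin d)) (k : Fin d) (hk : k ∉ S)
    -- conditional probability that `X_k = b` given the `S`-pattern of `y`
    (Pk : (Fin d → A) → A → ℝ)
    (hPk : ∀ y b, Pk y b =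
      (∑ x ∈ Finset.univ.filter (fun x => (∀ i ∈ S, x i = y i) ∧ x k = b), π x) /
      (∑ x ∈ Finset.univ.filter (fun x => ∀ i ∈ S, x i = y i), π x))
    -- conditional law of `X_0` given the `S`-pattern of `y` and `X_k = b`
    (law : (Fin d → A) → A → A → ℝ)
    (hlaw : ∀ y b a, law y b a =
      (∑ x ∈ Finset.univ.filter (fun x => (∀ i ∈ S, x i = y i) ∧ x k = b), W x a) /
      (∑ x ∈ Finset.univ.filter (fun x => (∀ i ∈ S, x i = y i) ∧ x k = b), π x))
    -- conditional influence measure ν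
    (ν : (Fin d → A) → ℝ)
    (hν : ∀ y, ν y = ∑ b, ∑ c, Pk y b * Pk y c *
      ((1/2 : ℝ) * ∑ a, |law y b a - law y c a|))
    -- conditional expectation and covariance given the `S`-pattern of `y`
    (cE : (Fin d → A) → ((Fin d → A) → A → ℝ) → ℝ)
    (hcE : ∀ y f, cE y f =
      (∑ x ∈ Finset.univ.filter (fun x => ∀ i ∈ S, x i = y i), ∑ a, W x a * f x a) /
      (∑ x ∈ Finset.univ.filter (fun x => ∀ i ∈ S, x i = y i), π x))
    (cCov : (Fin d → A) → ((Fin d → A) → A → ℝ) → ((Fin d → A) → A → ℝ) → ℝ)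
    (hcCov : ∀ y f g, cCov y f g = cE y (fun x a => f x a * g x a) - cE y f * cE y g) :
    ∑ x, π x * |cCov x (fun _ a => v a) (fun z _ => v (z k))|
      ≤ ((Finset.univ : Finset (A × A)).sup' Finset.univ_nonempty
            (fun ab => |v ab.1 - v ab.2|)) *
        (Finset.univ.sup' Finset.univ_nonempty (fun a => |v a|)) *
        (∑ x, π x * ν x) :=
  stmt9_general d v W hW π hπ S k hk Pk hPk law hlaw ν hν cE hcE cCov hcCov
end

section
/- Exponential supermartingale for bounded-increment martingales: for the martingale H•M^a with |H_t| ≤ b, and any λ > 0, the process exp(λ H•M^a_t − ((e^{λb} − λb − 1)/b²) ⟨H•M^a⟩_t) is a supermartingale starting from 1. -/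
/-!
Write `q_s = p(a | X_{s-d:s-1})`, `I_s = 1{X_s = a}` and `κ = (e^{λb} - λb - 1)/b²`. The process is
the running product of the factors `exp (λ H_s (I_s - q_s) - κ H_s² q_s (1 - q_s))`, and a product
of bounded nonnegative adapted factors whose conditional means are at most one is a
supermartingale. Given `ℱ_{s-1}`, `I_s` is Bernoulli(`q_s`), so the conditional mean of a factor
is `(1 - q) e^{-uq - v} + q e^{u(1-q) - v}` with `u = λ H_s`, `v = κ H_s² q (1 - q)`. Bennett's
inequality `e^y ≤ 1 + y + ((e^c - c - 1)/c²) y²` for `y ≤ c = λb` (the ratio `(e^y - 1 - y)/y²`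
is increasing) bounds `(1 - q) e^{-uq} + q e^{u(1-q)}` by `1 + v ≤ e^v`.
-/

open MeasureTheory Finset
open scoped Nat

theorem mul_sub_le_of_abs_le {u c i q : ℝ} (hu : |u| ≤ c) (hi₀ : 0 ≤ i) (hi₁ : i ≤ 1)
    (hq₀ : 0 ≤ q) (hq₁ : q ≤ 1) : u * (i - q) ≤ c := by
  have hiq : |i - q| ≤ 1 := abs_le.2 ⟨by linarith, by linarith⟩
  calc u * (i - q) ≤ |u| * |i - q| := by rw [← abs_mul]; exact le_abs_self _
    _ ≤ c * 1 := by gcongr; exact (abs_nonneg u).trans hu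
    _ = c := mul_one c

namespace Real

theorem exp_sub_sub_one_div_sq_nonneg (x y : ℝ) : 0 ≤ (exp x - x - 1) / y ^ 2 :=
  div_nonneg (by linarith [add_one_le_exp x]) (sq_nonneg y)

theorem exp_le_quadratic_of_nonpos {y : ℝ} (hy : y ≤ 0) : exp y ≤ 1 + y + y ^ 2 / 2 := by
  -- `e^{-y}` is at least its cubic Taylor polynomial, whose product with `1 + y + y²/2`
  -- is `1 - y³/6 + y⁴/12 - y⁵/12 ≥ 1`
  have hcubic := sum_le_exp_of_nonneg (neg_nonneg.2 hy) 4
  norm_num [sum_range_succ, Nat.factorial] at hcubic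
  have hinv : exp y * exp (-y) = 1 := by rw [← exp_add, add_neg_cancel, exp_zero]
  nlinarith [exp_pos y,
    mul_nonneg (mul_nonneg (exp_pos y).le (sq_nonneg y)) (neg_nonneg.2 hy)]

theorem exp_sub_one_sub_eq_tsum (x : ℝ) :
    exp x - 1 - x = ∑' n : ℕ, x ^ (n + 2) / (n + 2)! := by
  rw [exp_eq_exp_ℝ, NormedSpace.exp_eq_tsum_div]
  beta_reduce
  rw [← (summable_pow_div_factorial x).sum_add_tsum_nat_add 2]
  norm_num [sum_range_succ]
  ring

theorem exp_sub_one_sub_le_of_le {c y : ℝ} (hc : 0 < c) (hy₀ : 0 ≤ y) (hyc : y ≤ c) :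
    exp y - 1 - y ≤ (y / c) ^ 2 * (exp c - 1 - c) := by
  have htail (x : ℝ) : Summable fun n : ℕ => x ^ (n + 2) / (n + 2)! :=
    (summable_nat_add_iff 2).2 (summable_pow_div_factorial x)
  rw [exp_sub_one_sub_eq_tsum, exp_sub_one_sub_eq_tsum, ← tsum_mul_left]
  refine (htail y).tsum_le_tsum (fun n => ?_) ((htail c).mul_left _)
  rw [← mul_div_assoc]
  gcongr
  calc y ^ (n + 2) = (y / c) ^ 2 * c ^ 2 * y ^ n := by field_simp; ring
    _ ≤ (y / c) ^ 2 * c ^ 2 * c ^ n := by gcongr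
    _ = (y / c) ^ 2 * c ^ (n + 2) := by ring

theorem exp_le_one_add_add_mul_sq_of_le {c y : ℝ} (hc : 0 < c) (hyc : y ≤ c) :
    exp y ≤ 1 + y + (exp c - c - 1) / c ^ 2 * y ^ 2 := by
  rcases le_or_gt y 0 with hy | hy
  · have hhalf : 1 / 2 ≤ (exp c - c - 1) / c ^ 2 := by
      rw [le_div_iff₀ (by positivity)]
      linarith [quadratic_le_exp_of_nonneg hc.le]
    nlinarith [exp_le_quadratic_of_nonpos hy, sq_nonneg y]
  · have := exp_sub_one_sub_le_of_le hc hy.le hyc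
    have : (y / c) ^ 2 * (exp c - 1 - c) = (exp c - c - 1) / c ^ 2 * y ^ 2 := by
      field_simp; ring
    linarith

theorem centered_bernoulli_mgf_le {c u q : ℝ} (hc : 0 < c) (hu : |u| ≤ c) (hq₀ : 0 ≤ q)
    (hq₁ : q ≤ 1) :
    (1 - q) * exp (u * (0 - q)) + q * exp (u * (1 - q))
      ≤ exp ((exp c - c - 1) / c ^ 2 * (u ^ 2 * q * (1 - q))) := by
  set K := (exp c - c - 1) / c ^ 2
  have h₀ := exp_le_one_add_add_mul_sq_of_le hc
    (mul_sub_le_of_abs_le hu le_rfl zero_le_one hq₀ hq₁)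
  have h₁ := exp_le_one_add_add_mul_sq_of_le hc
    (mul_sub_le_of_abs_le hu zero_le_one le_rfl hq₀ hq₁)
  calc (1 - q) * exp (u * (0 - q)) + q * exp (u * (1 - q))
      ≤ (1 - q) * (1 + u * (0 - q) + K * (u * (0 - q)) ^ 2)
        + q * (1 + u * (1 - q) + K * (u * (1 - q)) ^ 2) := by
        gcongr
    _ = K * (u ^ 2 * q * (1 - q)) + 1 := by ring
    _ ≤ exp (K * (u ^ 2 * q * (1 - q))) := add_one_le_exp _

end Real

/-- The one-step factor of the exponential process: `i` plays `1{X_s = a}`, `q` its predicted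
probability, `h` the predictable weight, and `h² q (1 - q)` is the increment of `⟨H•M^a⟩`. -/
noncomputable def compensatedExp (l κ h q i : ℝ) : ℝ :=
  Real.exp (l * (h * (i - q)) - κ * (h ^ 2 * q * (1 - q)))

theorem compensatedExp_zero_weight (l κ q i : ℝ) : compensatedExp l κ 0 q i = 1 := by
  simp [compensatedExp]

theorem compensatedExp_le {l κ h q i b : ℝ} (hl : 0 ≤ l) (hκ : 0 ≤ κ) (hh : |h| ≤ b)
    (hq₀ : 0 ≤ q) (hq₁ : q ≤ 1) (hi : i = 0 ∨ i = 1) :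
    compensatedExp l κ h q i ≤ Real.exp (l * b) := by
  obtain ⟨hi₀, hi₁⟩ : 0 ≤ i ∧ i ≤ 1 := by rcases hi with rfl | rfl <;> norm_num
  have hinc := mul_sub_le_of_abs_le hh hi₀ hi₁ hq₀ hq₁
  have hvar : 0 ≤ κ * (h ^ 2 * q * (1 - q)) := by
    have : 0 ≤ 1 - q := by linarith
    positivity
  unfold compensatedExp
  gcongr
  nlinarith

theorem compensatedExp_eq_mul (l κ h q i : ℝ) :
    compensatedExp l κ h q i
      = Real.exp (l * h * (i - q)) * Real.exp (-(κ * (h ^ 2 * q * (1 - q)))) := by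
  rw [compensatedExp, ← Real.exp_add]
  ring_nf

theorem bernoulli_mean_compensatedExp_le_one {b l h q : ℝ} (hb : 0 < b) (hl : 0 < l)
    (hh : |h| ≤ b) (hq₀ : 0 ≤ q) (hq₁ : q ≤ 1) :
    (1 - q) * compensatedExp l ((Real.exp (l * b) - l * b - 1) / b ^ 2) h q 0
      + q * compensatedExp l ((Real.exp (l * b) - l * b - 1) / b ^ 2) h q 1 ≤ 1 := by
  set κ := (Real.exp (l * b) - l * b - 1) / b ^ 2
  have hmgf := Real.centered_bernoulli_mgf_le (mul_pos hl hb)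
    (by rw [abs_mul, abs_of_pos hl]; gcongr) hq₀ hq₁ (u := l * h)
  have hκ : (Real.exp (l * b) - l * b - 1) / (l * b) ^ 2 * ((l * h) ^ 2 * q * (1 - q))
      = κ * (h ^ 2 * q * (1 - q)) := by
    simp only [κ]
    field_simp
  rw [hκ] at hmgf
  rw [compensatedExp_eq_mul, compensatedExp_eq_mul]
  calc _ = ((1 - q) * Real.exp (l * h * (0 - q)) + q * Real.exp (l * h * (1 - q)))
        * Real.exp (-(κ * (h ^ 2 * q * (1 - q)))) := by ring
    _ ≤ Real.exp (κ * (h ^ 2 * q * (1 - q))) * Real.exp (-(κ * (h ^ 2 * q * (1 - q)))) := by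
        gcongr
    _ = 1 := by rw [← Real.exp_add, add_neg_cancel, Real.exp_zero]

section

variable {Ω : Type*} {m m₀ : MeasurableSpace Ω}

theorem stronglyMeasurable_comp_of_indicators {ι A : Type*} [Finite ι] [Countable A]
    [DecidableEq A] {Y : ι → Ω → A}
    (hY : ∀ i a, StronglyMeasurable[m] fun ω => if Y i ω = a then (1 : ℝ) else 0)
    (g : (ι → A) → ℝ) : StronglyMeasurable[m] fun ω => g fun i => Y i ω := by
  let _ : MeasurableSpace A := ⊤
  have hY_meas (i : ι) : Measurable[m] (Y i) := measurable_to_countable' fun a => by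
    convert (hY i a).measurable (measurableSet_singleton 1) using 1
    ext ω
    simp
  exact ((measurable_of_countable g).comp (measurable_pi_lambda _ hY_meas)).stronglyMeasurable

theorem MeasureTheory.StronglyMeasurable.compensatedExp {l κ : ℝ} {h q i : Ω → ℝ}
    (hh : StronglyMeasurable[m] h) (hq : StronglyMeasurable[m] q)
    (hi : StronglyMeasurable[m] i) :
    StronglyMeasurable[m] fun ω => compensatedExp l κ (h ω) (q ω) (i ω) :=
  Real.continuous_exp.comp_stronglyMeasurable
    (((hh.mul (hi.sub hq)).const_mul l).sub
      ((((hh.pow 2).mul hq).mul (stronglyMeasurable_const.sub hq)).const_mul κ))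

theorem condExp_add_mul_ae_eq {μ : Measure Ω} [IsFiniteMeasure μ] (hm : m ≤ m₀)
    {g g' I : Ω → ℝ}
    (hg : StronglyMeasurable[m] g) (hg' : StronglyMeasurable[m] g') (hgi : Integrable g μ)
    (hg'I : Integrable (g' * I) μ) (hI : Integrable I μ) :
    μ[g + g' * I | m] =ᵐ[μ] g + g' * μ[I | m] := by
  filter_upwards [condExp_add hgi hg'I m, condExp_mul_of_stronglyMeasurable_left hg' hg'I hI]
    with ω hadd hmul
  rw [hadd, Pi.add_apply, Pi.add_apply, hmul, condExp_of_stronglyMeasurable hm hg hgi]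

theorem condExp_compensatedExp_le_one {μ : Measure Ω} [IsFiniteMeasure μ] (hm : m ≤ m₀)
    {b l : ℝ} (hb : 0 < b) (hl : 0 < l) {h q I : Ω → ℝ}
    (hh : StronglyMeasurable[m] h) (hq : StronglyMeasurable[m] q)
    (hI : AEStronglyMeasurable I μ) (hhb : ∀ ω, |h ω| ≤ b) (hq₀ : ∀ ω, 0 ≤ q ω)
    (hq₁ : ∀ ω, q ω ≤ 1) (hI01 : ∀ ω, I ω = 0 ∨ I ω = 1) (hIq : μ[I | m] =ᵐ[μ] q) :
    μ[fun ω => compensatedExp l ((Real.exp (l * b) - l * b - 1) / b ^ 2) (h ω) (q ω) (I ω) | m]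
      ≤ᵐ[μ] 1 := by
  set κ := (Real.exp (l * b) - l * b - 1) / b ^ 2
  set e : ℝ → Ω → ℝ := fun i ω => compensatedExp l κ (h ω) (q ω) i
  have he_meas (i : ℝ) : StronglyMeasurable[m] (e i) :=
    hh.compensatedExp hq stronglyMeasurable_const
  have he_mem {i : ℝ} (hi : i = 0 ∨ i = 1) (ω : Ω) :
      e i ω ∈ Set.Ioc 0 (Real.exp (l * b)) :=
    ⟨Real.exp_pos _, compensatedExp_le hl.le (Real.exp_sub_sub_one_div_sq_nonneg _ _) (hhb ω)
      (hq₀ ω) (hq₁ ω) hi⟩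
  have he₀_int : Integrable (e 0) μ :=
    .of_bound ((he_meas 0).mono hm).aestronglyMeasurable _ <| ae_of_all _ fun ω => by
      rw [Real.norm_of_nonneg (he_mem (.inl rfl) ω).1.le]
      exact (he_mem (.inl rfl) ω).2
  have hI_int : Integrable I μ :=
    .of_bound hI 1 <| ae_of_all _ fun ω => by rcases hI01 ω with h | h <;> simp [h]
  have hdiff_int : Integrable ((e 1 - e 0) * I) μ := by
    refine hI_int.bdd_mul (c := Real.exp (l * b))
      (((he_meas 1).sub (he_meas 0)).mono hm).aestronglyMeasurable (ae_of_all _ fun ω => ?_)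
    have h₀ := he_mem (.inl rfl) ω
    have h₁ := he_mem (.inr rfl) ω
    rw [Real.norm_eq_abs, Pi.sub_apply, abs_le]
    constructor <;> linarith [h₀.1, h₀.2, h₁.1, h₁.2]
  have hdecomp : (fun ω => compensatedExp l κ (h ω) (q ω) (I ω)) = e 0 + (e 1 - e 0) * I := by
    funext ω
    rcases hI01 ω with hω | hω <;> simp [e, hω]
  rw [hdecomp]
  filter_upwards [condExp_add_mul_ae_eq hm (he_meas 0) ((he_meas 1).sub (he_meas 0)) he₀_int
    hdiff_int hI_int, hIq] with ω hω hIqω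
  rw [hω, Pi.add_apply, Pi.mul_apply, Pi.sub_apply, hIqω]
  calc e 0 ω + (e 1 ω - e 0 ω) * q ω = (1 - q ω) * e 0 ω + q ω * e 1 ω := by ring
    _ ≤ 1 := bernoulli_mean_compensatedExp_le_one hb hl (hhb ω) (hq₀ ω) (hq₁ ω)

theorem supermartingale_prod_range {μ : Measure Ω} [IsFiniteMeasure μ]
    {ℱ : Filtration ℕ m₀} {D : ℕ → Ω → ℝ} {C : ℝ} (hD : StronglyAdapted ℱ D)
    (hD₀ : ∀ t ω, 0 ≤ D t ω) (hDC : ∀ t ω, D t ω ≤ C)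
    (hcond : ∀ t, μ[D (t + 1) | ℱ t] ≤ᵐ[μ] 1) :
    Supermartingale (fun t ω => ∏ s ∈ range (t + 1), D s ω) ℱ μ := by
  set Z : ℕ → Ω → ℝ := fun t ω => ∏ s ∈ range (t + 1), D s ω
  have hZ : StronglyAdapted ℱ Z := fun t =>
    stronglyMeasurable_fun_prod _ fun s hs =>
      (hD s).mono (ℱ.mono (Nat.lt_succ_iff.1 (mem_range.1 hs)))
  have hZ_int (t : ℕ) : Integrable (Z t) μ := by
    refine .of_bound ((hZ t).mono (ℱ.le t)).aestronglyMeasurable (C ^ (t + 1))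
      (ae_of_all _ fun ω => ?_)
    rw [Real.norm_of_nonneg (prod_nonneg fun s _ => hD₀ s ω)]
    calc Z t ω ≤ ∏ _s ∈ range (t + 1), C :=
          prod_le_prod (fun s _ => hD₀ s ω) fun s _ => hDC s ω
      _ = C ^ (t + 1) := by rw [prod_const, card_range]
  have hD_int (t : ℕ) : Integrable (D t) μ :=
    .of_bound ((hD t).mono (ℱ.le t)).aestronglyMeasurable C <| ae_of_all _ fun ω => by
      rw [Real.norm_of_nonneg (hD₀ t ω)]
      exact hDC t ω
  have hZ_succ (t : ℕ) : Z (t + 1) = Z t * D (t + 1) := funext fun ω => prod_range_succ _ _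
  refine supermartingale_nat hZ hZ_int fun t => ?_
  filter_upwards [condExp_mul_of_stronglyMeasurable_left (hZ t) (hZ_succ t ▸ hZ_int (t + 1))
    (hD_int (t + 1)), hcond t] with ω hω hle
  rw [hZ_succ, hω, Pi.mul_apply]
  exact mul_le_of_le_one_right (prod_nonneg fun s _ => hD₀ s ω) hle

end

theorem stmt13_general {Ω : Type*} {m0 : MeasurableSpace Ω} (μ : Measure Ω)
    [IsProbabilityMeasure μ] (ℱ : Filtration ℕ m0)
    {A : Type*} [Fintype A] [DecidableEq A]
    (d : ℕ) (X : ℕ → Ω → A)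
    (hX : ∀ t a, StronglyMeasurable[ℱ t] (fun ω => (if X t ω = a then (1 : ℝ) else 0)))
    (p : A → (Fin d → A) → ℝ)
    (hp01 : ∀ a x, 0 ≤ p a x ∧ p a x ≤ 1)
    (hMarkov : ∀ s, d ≤ s → ∀ a,
      μ[fun ω => (if X s ω = a then (1 : ℝ) else 0) | ℱ (s - 1)]
        =ᵐ[μ] fun ω => p a (fun i => X (s - d + i) ω))
    (b : ℝ) (hb : 0 < b) (H : ℕ → Ω → ℝ)
    (hHmeas : ∀ s, StronglyMeasurable[ℱ (s - 1)] (H s))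
    (hHbdd : ∀ s ω, |H s ω| ≤ b)
    (hH0 : ∀ s ≤ d, ∀ ω, H s ω = 0)
    (a : A)
    (M : ℕ → Ω → ℝ)
    (hM : ∀ t ω, M t ω = ∑ s ∈ Finset.range (t + 1),
      H s ω * ((if X s ω = a then (1 : ℝ) else 0) - p a (fun i => X (s - d + i) ω)))
    (QV : ℕ → Ω → ℝ)
    (hQV : ∀ t ω, QV t ω = ∑ s ∈ Finset.range (t + 1),
      H s ω ^ 2 * p a (fun i => X (s - d + i) ω) * (1 - p a (fun i => X (s - d + i) ω)))
    (l : ℝ) (hl : 0 < l) :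
    Supermartingale
      (fun t ω => Real.exp (l * M t ω - ((Real.exp (l * b) - l * b - 1) / b ^ 2) * QV t ω))
      ℱ μ ∧
    ∀ ω, Real.exp (l * M 0 ω - ((Real.exp (l * b) - l * b - 1) / b ^ 2) * QV 0 ω) = 1 := by
  set κ := (Real.exp (l * b) - l * b - 1) / b ^ 2
  set I : ℕ → Ω → ℝ := fun s ω => if X s ω = a then 1 else 0
  set q : ℕ → Ω → ℝ := fun s ω => p a fun i => X (s - d + i) ω
  set D : ℕ → Ω → ℝ := fun s ω => compensatedExp l κ (H s ω) (q s ω) (I s ω)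
  have hZ : (fun t ω => Real.exp (l * M t ω - κ * QV t ω))
      = fun t ω => ∏ s ∈ range (t + 1), D s ω := by
    funext t ω
    rw [hM, hQV, mul_sum, mul_sum, ← sum_sub_distrib, Real.exp_sum]
    rfl
  have hD_eq_one (s : ℕ) (hs : s ≤ d) : D s = 1 := by
    funext ω
    simp only [D, hH0 s hs ω, compensatedExp_zero_weight, Pi.one_apply]
  have hq_meas (s : ℕ) (hs : d ≤ s) : StronglyMeasurable[ℱ (s - 1)] (q s) :=
    stronglyMeasurable_comp_of_indicators
      (fun i a => (hX _ a).mono (ℱ.mono (by omega))) (p a)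
  have hI01 (s : ℕ) (ω : Ω) : I s ω = 0 ∨ I s ω = 1 := by
    by_cases h : X s ω = a <;> simp [I, h]
  refine ⟨hZ ▸ supermartingale_prod_range (C := Real.exp (l * b)) ?_ ?_ ?_ ?_, fun ω => ?_⟩
  · intro s
    rcases le_or_gt s d with hs | hs
    · rw [hD_eq_one s hs]; exact stronglyMeasurable_const
    · exact ((hHmeas s).mono (ℱ.mono (Nat.sub_le s 1))).compensatedExp
        ((hq_meas s hs.le).mono (ℱ.mono (Nat.sub_le s 1))) (hX s a)
  · exact fun s ω => (Real.exp_pos _).le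
  · intro s ω
    exact compensatedExp_le hl.le (Real.exp_sub_sub_one_div_sq_nonneg _ _) (hHbdd s ω)
      (hp01 a _).1 (hp01 a _).2 (hI01 s ω)
  · intro t
    rcases le_or_gt d t with ht | ht
    · exact condExp_compensatedExp_le_one (ℱ.le t) hb hl (hHmeas (t + 1))
        (hq_meas (t + 1) (by omega)) ((hX (t + 1) a).mono (ℱ.le _)).aestronglyMeasurable
        (hHbdd _) (fun ω => (hp01 a _).1) (fun ω => (hp01 a _).2) (hI01 _)
        (hMarkov (t + 1) (by omega) a)
    · rw [hD_eq_one (t + 1) ht, Pi.one_def, condExp_const (ℱ.le t)]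
  · simpa [hD_eq_one 0 (Nat.zero_le d)] using congrFun (congrFun hZ 0) ω

theorem stmt13 {Ω : Type*} {m0 : MeasurableSpace Ω} (μ : Measure Ω)
    [IsProbabilityMeasure μ] (ℱ : Filtration ℕ m0)
    {A : Type*} [Fintype A] [DecidableEq A]
    (d : ℕ) (X : ℕ → Ω → A)
    (hX : ∀ t a, StronglyMeasurable[ℱ t] (fun ω => (if X t ω = a then (1 : ℝ) else 0)))
    (p : A → (Fin d → A) → ℝ)
    (hp01 : ∀ a x, 0 ≤ p a x ∧ p a x ≤ 1)
    (hpsum : ∀ x, ∑ a, p a x = 1)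
    (hMarkov : ∀ s, d ≤ s → ∀ a,
      μ[fun ω => (if X s ω = a then (1 : ℝ) else 0) | ℱ (s - 1)]
        =ᵐ[μ] fun ω => p a (fun i => X (s - d + i) ω))
    (b : ℝ) (hb : 0 < b) (H : ℕ → Ω → ℝ)
    (hHmeas : ∀ s, StronglyMeasurable[ℱ (s - 1)] (H s))
    (hHbdd : ∀ s ω, |H s ω| ≤ b)
    (hH0 : ∀ s ≤ d, ∀ ω, H s ω = 0)
    (a : A)
    (M : ℕ → Ω → ℝ)
    (hM : ∀ t ω, M t ω = ∑ s ∈ Finset.range (t + 1),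
      H s ω * ((if X s ω = a then (1 : ℝ) else 0) - p a (fun i => X (s - d + i) ω)))
    (QV : ℕ → Ω → ℝ)
    (hQV : ∀ t ω, QV t ω = ∑ s ∈ Finset.range (t + 1),
      H s ω ^ 2 * p a (fun i => X (s - d + i) ω) * (1 - p a (fun i => X (s - d + i) ω)))
    (l : ℝ) (hl : 0 < l) :
    Supermartingale
      (fun t ω => Real.exp (l * M t ω - ((Real.exp (l * b) - l * b - 1) / b ^ 2) * QV t ω))
      ℱ μ ∧
    ∀ ω, Real.exp (l * M 0 ω - ((Real.exp (l * b) - l * b - 1) / b ^ 2) * QV 0 ω) = 1 :=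
  stmt13_general μ ℱ d X hX p hp01 hMarkov b hb H hHmeas hHbdd hH0 a M hM QV hQV l hl
end

section
/- Economical Freedman inequality: for the martingale M = H•M^a with increments bounded by b and any α > 0, v > 0 and t, P(M_t ≥ √(2vα) + αb/3, ⟨M⟩_t ≤ v) ≤ e^{−α} P(⟨M⟩_t > 0). -/
/-!
For `0 < θ < 3 / b`, an increment `ξ = H (𝟙{X = a} - p)` with `|H| ≤ b` and predictable `H`, `p`
satisfies `E[exp (θ ξ) | past] ≤ exp (κ H² p (1 - p))` with `κ = θ² / (2 (1 - θ b / 3))`: this is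
the bound `ψ(x) = eˣ - x - 1 ≤ x² / (2 (1 - x / 3))` applied to the two values of `ξ`. Hence
`Z = exp (θ M - κ ⟨M⟩)` is a supermartingale with `E Z_t ≤ 1`.

An increment whose conditional variance `H² p (1 - p)` vanishes is itself a.s. zero, so on
`{⟨M⟩_t = 0}` also `M_t = 0` and `Z_t = 1`. Therefore `E[Z_t; ⟨M⟩_t > 0] ≤ P(⟨M⟩_t > 0)`, and
Markov's inequality on the event `{⟨M⟩_t > 0}`, with `θ` chosen so that
`θ (√(2vα) + αb/3) - κ v = α`, gives the factor `e^{-α} P(⟨M⟩_t > 0)`.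
-/

open MeasureTheory Finset Real

lemma exp_mul_six_sub_two_mul_le {x : ℝ} (hx : 0 ≤ x) :
    exp x * (6 - 2 * x) ≤ 6 + 4 * x + x ^ 2 := by
  set G : ℝ → ℝ := fun y => (6 + 4 * y + y ^ 2) * exp (-y) + 2 * y
  have hG : ∀ y, HasDerivAt G (2 - (2 + 2 * y + y ^ 2) * exp (-y)) y := fun y => by
    refine ((((hasDerivAt_id y).const_mul 4).const_add 6).add (hasDerivAt_pow 2 y)).mul
      (hasDerivAt_neg y).exp |>.add ((hasDerivAt_id y).const_mul 2) |>.congr_deriv ?_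
    simp only [id, Pi.add_apply]
    push_cast
    ring
  have hmono : MonotoneOn G (Set.Ici 0) := by
    refine monotoneOn_of_deriv_nonneg (convex_Ici 0)
      (fun y _ => (hG y).continuousAt.continuousWithinAt)
      (fun y _ => (hG y).differentiableAt.differentiableWithinAt) fun y hy => ?_
    rw [interior_Ici] at hy
    rw [(hG y).deriv, sub_nonneg, exp_neg, ← div_eq_mul_inv, div_le_iff₀ (exp_pos y)]
    linarith [quadratic_le_exp_of_nonneg hy.le]
  have h := hmono Set.self_mem_Ici hx hx
  simp only [G, mul_zero, add_zero, neg_zero, exp_zero, mul_one, zero_pow two_ne_zero] at h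
  have hexp : exp x * exp (-x) = 1 := by rw [← exp_add, add_neg_cancel, exp_zero]
  nlinarith [exp_pos x]

lemma exp_le_one_add_add_sq_div {x u : ℝ} (hxu : |x| ≤ u) (hu : u < 3) :
    exp x ≤ 1 + x + x ^ 2 / (2 * (1 - u / 3)) := by
  -- for `x < 0` this is `sinh x ≤ x`
  have hsym : exp x - x ≤ exp |x| - |x| := by
    rcases le_or_gt 0 x with h | h
    · rw [abs_of_nonneg h]
    · have := sinh_le_self_iff.2 h.le
      rw [sinh_eq, abs_of_neg h] at *
      linarith
  have hx3 : 0 < 2 * (1 - |x| / 3) := by linarith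
  have habs : exp |x| ≤ 1 + |x| + x ^ 2 / (2 * (1 - |x| / 3)) := by
    rw [add_div' _ _ _ hx3.ne', le_div_iff₀ hx3]
    linarith [exp_mul_six_sub_two_mul_le (abs_nonneg x), sq_abs x]
  have hden : x ^ 2 / (2 * (1 - |x| / 3)) ≤ x ^ 2 / (2 * (1 - u / 3)) :=
    div_le_div_of_nonneg_left (sq_nonneg x) (by linarith) (by linarith)
  linarith

/-- `ψ(θ y) ≤ bernsteinRate b θ * y²` for `|y| ≤ b`, where `ψ(x) = eˣ - x - 1`. -/
noncomputable def bernsteinRate (b θ : ℝ) : ℝ := θ ^ 2 / (2 * (1 - θ * b / 3))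

lemma bernsteinRate_nonneg {b θ : ℝ} (hθb : θ * b < 3) : 0 ≤ bernsteinRate b θ :=
  div_nonneg (sq_nonneg θ) (by linarith)

lemma exp_mul_le_one_add_add_bernsteinRate {b θ y : ℝ} (hθ : 0 ≤ θ) (hθb : θ * b < 3)
    (hy : |y| ≤ b) : exp (θ * y) ≤ 1 + θ * y + bernsteinRate b θ * y ^ 2 := by
  have := exp_le_one_add_add_sq_div (x := θ * y) (u := θ * b)
    (by rw [abs_mul, abs_of_nonneg hθ]; exact mul_le_mul_of_nonneg_left hy hθ) hθb
  rw [bernsteinRate]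
  convert this using 2
  ring

lemma bernoulli_mgf_le {b θ h q : ℝ} (hθ : 0 ≤ θ) (hθb : θ * b < 3) (hh : |h| ≤ b)
    (hq0 : 0 ≤ q) (hq1 : q ≤ 1) :
    q * exp (θ * h * (1 - q)) + (1 - q) * exp (-(θ * h * q)) ≤
      exp (bernsteinRate b θ * (h ^ 2 * q * (1 - q))) := by
  have hbound : ∀ r, 0 ≤ r → r ≤ 1 → |h * r| ≤ b := fun r hr0 hr1 => by
    rw [abs_mul, abs_of_nonneg hr0]
    nlinarith [abs_nonneg h]
  have h1 := exp_mul_le_one_add_add_bernsteinRate hθ hθb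
    (hbound (1 - q) (by linarith) (by linarith))
  have h2 := exp_mul_le_one_add_add_bernsteinRate hθ hθb
    (by simpa only [neg_mul, abs_neg] using hbound q hq0 hq1 : |-(h * q)| ≤ b)
  rw [← mul_assoc] at h1
  rw [mul_neg, ← mul_assoc] at h2
  calc q * exp (θ * h * (1 - q)) + (1 - q) * exp (-(θ * h * q))
      ≤ q * (1 + θ * h * (1 - q) + bernsteinRate b θ * (h * (1 - q)) ^ 2)
        + (1 - q) * (1 + -(θ * h * q) + bernsteinRate b θ * (-(h * q)) ^ 2) :=
        add_le_add (mul_le_mul_of_nonneg_left h1 hq0)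
          (mul_le_mul_of_nonneg_left h2 (by linarith))
    _ = 1 + bernsteinRate b θ * (h ^ 2 * q * (1 - q)) := by ring
    _ ≤ exp (bernsteinRate b θ * (h ^ 2 * q * (1 - q))) := by
        rw [add_comm]
        exact add_one_le_exp _

lemma exists_bernsteinRate_le {b α v : ℝ} (hb : 0 ≤ b) (hα : 0 < α) (hv : 0 < v) :
    ∃ θ, 0 < θ ∧ θ * b < 3 ∧
      α ≤ θ * (√(2 * v * α) + α * b / 3) - bernsteinRate b θ * v := by
  -- `θ = q / (1 + q b / 3)` with `q = √(2α / v)` turns the inequality into an equality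
  set q := √(2 * α / v)
  have hq : 0 < q := sqrt_pos.2 (by positivity)
  have hq2 : q ^ 2 * v = 2 * α := by
    rw [sq_sqrt (by positivity)]
    field_simp
  have hsqrt : √(2 * v * α) = v * q := by
    rw [← sqrt_sq (by positivity : 0 ≤ v * q)]
    congr 1
    linear_combination (-v) * hq2
  have hD : 0 < 1 + q * b / 3 := by positivity
  refine ⟨q / (1 + q * b / 3), by positivity, ?_, le_of_eq ?_⟩
  · rw [div_mul_eq_mul_div, div_lt_iff₀ hD]
    linarith
  · rw [hsqrt, bernsteinRate]
    field_simp
    linear_combination (-9) * hq2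

section CondExp

variable {Ω : Type*} {m m0 : MeasurableSpace Ω} {μ : Measure Ω} [IsFiniteMeasure μ]

lemma ae_eq_zero_of_condExp_eq_zero (hm : m ≤ m0) {f : Ω → ℝ} (hf : 0 ≤ f)
    (hfi : Integrable f μ) : ∀ᵐ ω ∂μ, μ[f|m] ω = 0 → f ω = 0 := by
  have hS : MeasurableSet[m] {ω | μ[f|m] ω = 0} :=
    stronglyMeasurable_condExp.measurable (measurableSet_singleton 0)
  have h : ∫ ω in {ω | μ[f|m] ω = 0}, f ω ∂μ = 0 := by
    rw [← setIntegral_condExp hm hfi hS]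
    exact setIntegral_eq_zero_of_forall_eq_zero fun ω hω => hω
  rw [setIntegral_eq_zero_iff_of_nonneg_ae (ae_of_all _ hf) hfi.integrableOn] at h
  exact (ae_restrict_iff' (hm _ hS)).1 h

lemma condExp_exp_mul_sub_of_zero_or_one (hm : m ≤ m0) {I P g : Ω → ℝ} {C : ℝ}
    (hI : ∀ ω, I ω = 0 ∨ I ω = 1) (hIm : StronglyMeasurable[m0] I) (hIP : μ[I|m] =ᵐ[μ] P)
    (hP : StronglyMeasurable[m] P) (hP01 : ∀ ω, 0 ≤ P ω ∧ P ω ≤ 1)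
    (hg : StronglyMeasurable[m] g) (hgC : ∀ ω, |g ω| ≤ C) :
    μ[fun ω => exp (g ω * (I ω - P ω))|m] =ᵐ[μ]
      fun ω => P ω * exp (g ω * (1 - P ω)) + (1 - P ω) * exp (-(g ω * P ω)) := by
  set e₀ : Ω → ℝ := fun ω => exp (-(g ω * P ω))
  set e₁ : Ω → ℝ := fun ω => exp (g ω * (1 - P ω))
  have he₀ : StronglyMeasurable[m] e₀ := by fun_prop
  have he₁ : StronglyMeasurable[m] e₁ := by fun_prop
  have hbound : ∀ ω, |g ω * P ω| ≤ C ∧ |g ω * (1 - P ω)| ≤ C := fun ω => by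
    obtain ⟨h0, h1⟩ := hP01 ω
    constructor <;>
    · rw [abs_mul]
      nlinarith [abs_nonneg (g ω), hgC ω, abs_of_nonneg h0, abs_of_nonneg (sub_nonneg.2 h1)]
  have he₀i : Integrable e₀ μ := .of_bound (he₀.mono hm).aestronglyMeasurable (exp C)
    (ae_of_all _ fun ω => by
      rw [norm_eq_abs, abs_exp]
      exact exp_le_exp.2 ((neg_le_abs _).trans (hbound ω).1))
  have he₁i : Integrable e₁ μ := .of_bound (he₁.mono hm).aestronglyMeasurable (exp C)
    (ae_of_all _ fun ω => by
      rw [norm_eq_abs, abs_exp]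
      exact exp_le_exp.2 ((le_abs_self _).trans (hbound ω).2))
  have hIi : Integrable I μ := .of_bound hIm.aestronglyMeasurable 1
    (ae_of_all _ fun ω => by rcases hI ω with h | h <;> simp [h])
  have hprodi : Integrable ((e₁ - e₀) * I) μ :=
    (he₁i.sub he₀i).mono (((he₁.sub he₀).mono hm).mul hIm).aestronglyMeasurable
      (ae_of_all _ fun ω => by rcases hI ω with h | h <;> simp [h])
  have hsplit : (fun ω => exp (g ω * (I ω - P ω))) = e₀ + (e₁ - e₀) * I := by
    ext ω
    rcases hI ω with h | h <;>
      simp only [e₀, e₁, Pi.add_apply, Pi.mul_apply, Pi.sub_apply, h] <;> ring_nf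
  rw [hsplit]
  filter_upwards [condExp_add he₀i hprodi m,
    condExp_mul_of_stronglyMeasurable_left (he₁.sub he₀) hprodi hIi, hIP] with ω hadd hmul hω
  rw [hadd, Pi.add_apply, hmul, condExp_of_stronglyMeasurable hm he₀ he₀i]
  simp only [Pi.mul_apply, Pi.sub_apply, hω, e₀, e₁]
  ring

end CondExp

section Bernstein

variable {Ω : Type*} {m m' m0 : MeasurableSpace Ω} {μ : Measure Ω}

/-- The one-step hypotheses of Freedman's inequality: `ξ` is the increment of `M` and `w` that of
`⟨M⟩`, with `m` the past and `m'` the present. -/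
structure IsBernsteinIncrement (μ : Measure Ω) (m m' : MeasurableSpace Ω) (b : ℝ)
    (ξ w : Ω → ℝ) : Prop where
  stronglyMeasurable : StronglyMeasurable[m'] ξ
  stronglyMeasurable_var : StronglyMeasurable[m] w
  abs_le : ∀ ω, |ξ ω| ≤ b
  var_nonneg : ∀ ω, 0 ≤ w ω
  condExp_exp_le : ∀ θ, 0 < θ → θ * b < 3 →
    μ[fun ω => exp (θ * ξ ω)|m] ≤ᵐ[μ] fun ω => exp (bernsteinRate b θ * w ω)
  ae_eq_zero_of_var_eq_zero : ∀ᵐ ω ∂μ, w ω = 0 → ξ ω = 0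

namespace IsBernsteinIncrement

variable {b θ : ℝ} {ξ w : Ω → ℝ}

lemma zero [IsFiniteMeasure μ] (hm : m ≤ m0) (hb : 0 ≤ b) :
    IsBernsteinIncrement μ m m' b (fun _ => 0) (fun _ => 0) where
  stronglyMeasurable := stronglyMeasurable_const
  stronglyMeasurable_var := stronglyMeasurable_const
  abs_le _ := by simpa using hb
  var_nonneg _ := le_rfl
  condExp_exp_le _ _ _ := by
    simp only [mul_zero, exp_zero, condExp_const hm]
    exact Filter.EventuallyLE.rfl
  ae_eq_zero_of_var_eq_zero := ae_of_all _ fun _ _ => rfl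

lemma stronglyMeasurable_exp_mul (h : IsBernsteinIncrement μ m m' b ξ w) :
    StronglyMeasurable[m'] fun ω => exp (θ * ξ ω) :=
  continuous_exp.comp_stronglyMeasurable (stronglyMeasurable_const.mul h.stronglyMeasurable)

lemma integrable_exp_mul [IsFiniteMeasure μ] (h : IsBernsteinIncrement μ m m' b ξ w)
    (hm' : m' ≤ m0) (hθ : 0 ≤ θ) : Integrable (fun ω => exp (θ * ξ ω)) μ :=
  .of_bound (h.stronglyMeasurable_exp_mul.mono hm').aestronglyMeasurable (exp (θ * b))
    (ae_of_all _ fun ω => by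
      rw [norm_eq_abs, abs_exp, exp_le_exp]
      exact mul_le_mul_of_nonneg_left ((le_abs_self _).trans (h.abs_le ω)) hθ)

end IsBernsteinIncrement

lemma isBernsteinIncrement_bernoulli [IsFiniteMeasure μ] (hm : m ≤ m') (hm' : m' ≤ m0)
    {I P H : Ω → ℝ} {b : ℝ} (hI : ∀ ω, I ω = 0 ∨ I ω = 1) (hIm : StronglyMeasurable[m'] I)
    (hIP : μ[I|m] =ᵐ[μ] P) (hP : StronglyMeasurable[m] P) (hP01 : ∀ ω, 0 ≤ P ω ∧ P ω ≤ 1)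
    (hH : StronglyMeasurable[m] H) (hHb : ∀ ω, |H ω| ≤ b) :
    IsBernsteinIncrement μ m m' b (fun ω => H ω * (I ω - P ω))
      (fun ω => H ω ^ 2 * P ω * (1 - P ω)) where
  stronglyMeasurable := (hH.mono hm).mul (hIm.sub (hP.mono hm))
  stronglyMeasurable_var := (hH.pow 2).mul hP |>.mul (stronglyMeasurable_const.sub hP)
  abs_le ω := by
    have : |I ω - P ω| ≤ 1 := by
      rw [abs_le]
      rcases hI ω with h | h <;> constructor <;> linarith [hP01 ω]
    rw [abs_mul]
    nlinarith [abs_nonneg (H ω), abs_nonneg (I ω - P ω), hHb ω]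
  var_nonneg ω := mul_nonneg (mul_nonneg (sq_nonneg _) (hP01 ω).1) (sub_nonneg.2 (hP01 ω).2)
  condExp_exp_le θ hθ hθb := by
    have hcond := condExp_exp_mul_sub_of_zero_or_one (hm.trans hm') hI (hIm.mono hm') hIP hP
      hP01 (g := fun ω => θ * H ω) (stronglyMeasurable_const.mul hH) (C := θ * b) fun ω => by
        rw [abs_mul, abs_of_pos hθ]
        exact mul_le_mul_of_nonneg_left (hHb ω) hθ.le
    filter_upwards [hcond] with ω hω
    simp only [← mul_assoc θ]
    rw [hω]
    exact bernoulli_mgf_le hθ.le hθb (hHb ω) (hP01 ω).1 (hP01 ω).2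
  ae_eq_zero_of_var_eq_zero := by
    have hI01 : ∀ ω, 0 ≤ I ω ∧ I ω ≤ 1 := fun ω => by rcases hI ω with h | h <;> simp [h]
    have hIi : Integrable I μ := .of_bound (hIm.mono hm').aestronglyMeasurable 1
      (ae_of_all _ fun ω => by rw [norm_eq_abs, abs_le]; constructor <;> linarith [hI01 ω])
    have hIP' : μ[(fun _ => 1) - I|m] =ᵐ[μ] fun ω => 1 - P ω := by
      filter_upwards [condExp_sub (integrable_const (1 : ℝ)) hIi m, hIP] with ω h hω
      simpa [condExp_const (hm.trans hm'), hω] using h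
    filter_upwards [hIP, hIP',
      ae_eq_zero_of_condExp_eq_zero (hm.trans hm') (fun ω => (hI01 ω).1) hIi,
      ae_eq_zero_of_condExp_eq_zero (hm.trans hm') (f := (fun _ => 1) - I)
        (fun ω => sub_nonneg.2 (hI01 ω).2)
        ((integrable_const 1).sub hIi)] with ω hω hω' h0 h1 hvar
    rw [hω] at h0
    rw [hω'] at h1
    rcases mul_eq_zero.1 hvar with h | h
    · rcases mul_eq_zero.1 h with h | h
      · simp [pow_eq_zero_iff two_ne_zero |>.1 h]
      · simp [h0 h, h]
    · rw [← sub_eq_zero.1 (h1 h), ← sub_eq_zero.1 h, sub_self, mul_zero]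

end Bernstein

lemma ae_sum_eq_zero_of_sum_eq_zero {Ω : Type*} {m0 : MeasurableSpace Ω} {μ : Measure Ω}
    {ξ w : ℕ → Ω → ℝ} (hw : ∀ s ω, 0 ≤ w s ω) (hξw : ∀ s, ∀ᵐ ω ∂μ, w s ω = 0 → ξ s ω = 0)
    (S : Finset ℕ) : ∀ᵐ ω ∂μ, ∑ s ∈ S, w s ω = 0 → ∑ s ∈ S, ξ s ω = 0 := by
  filter_upwards [ae_all_iff.2 hξw] with ω hω hS
  rw [sum_eq_zero_iff_of_nonneg fun s _ => hw s ω] at hS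
  exact sum_eq_zero fun s hs => hω s (hS s hs)

lemma measure_setOf_le_inter_le_of_integral_le_one {Ω : Type*} {m0 : MeasurableSpace Ω}
    {μ : Measure Ω} [IsProbabilityMeasure μ] {Z : Ω → ℝ} {G : Set Ω} {ε : ℝ}
    (hZ : Integrable Z μ) (hZ0 : 0 ≤ Z) (hZ1 : ∫ ω, Z ω ∂μ ≤ 1) (hG : MeasurableSet G)
    (hZG : ∀ᵐ ω ∂μ, ω ∉ G → Z ω = 1) (hε : 0 < ε) :
    μ ({ω | ε ≤ Z ω} ∩ G) ≤ ENNReal.ofReal ε⁻¹ * μ G := by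
  have hGc : ∫ ω in Gᶜ, Z ω ∂μ = μ.real Gᶜ := by
    rw [setIntegral_congr_ae hG.compl (g := fun _ => 1) hZG]
    simp
  have hZG' : ∫ ω in G, Z ω ∂μ ≤ μ.real G := by
    linarith [integral_add_compl hG hZ, probReal_compl_eq_one_sub (μ := μ) hG]
  have hMarkov :=
    mul_meas_ge_le_integral_of_nonneg (μ := μ.restrict G) (ae_of_all _ hZ0) hZ.restrict ε
  rw [measureReal_restrict_apply' hG] at hMarkov
  rw [← ofReal_measureReal, ← ofReal_measureReal, ← ENNReal.ofReal_mul (inv_nonneg.2 hε.le)]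
  refine ENNReal.ofReal_le_ofReal ?_
  rw [inv_mul_eq_div, le_div_iff₀ hε]
  linarith

section Freedman

variable {Ω : Type*} {m0 : MeasurableSpace Ω} {μ : Measure Ω} {ℱ : Filtration ℕ m0}
  {ξ w : ℕ → Ω → ℝ} {b θ : ℝ}

noncomputable def expProcess (θ κ : ℝ) (ξ w : ℕ → Ω → ℝ) (t : ℕ) (ω : Ω) : ℝ :=
  exp (θ * ∑ s ∈ range (t + 1), ξ s ω - κ * ∑ s ∈ range (t + 1), w s ω)

lemma expProcess_succ (θ κ : ℝ) (ξ w : ℕ → Ω → ℝ) (t : ℕ) (ω : Ω) :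
    expProcess θ κ ξ w (t + 1) ω =
      expProcess θ κ ξ w t ω * exp (-(κ * w (t + 1) ω)) * exp (θ * ξ (t + 1) ω) := by
  rw [expProcess, expProcess, ← exp_add, ← exp_add, sum_range_succ (fun s => ξ s ω) (t + 1),
    sum_range_succ (fun s => w s ω) (t + 1)]
  ring_nf

lemma stronglyAdapted_expProcess
    (hinc : ∀ s, IsBernsteinIncrement μ (ℱ (s - 1)) (ℱ s) b (ξ s) (w s)) (κ : ℝ) :
    StronglyAdapted ℱ (expProcess θ κ ξ w) := fun t => by
  have hξ : StronglyMeasurable[ℱ t] fun ω => ∑ s ∈ range (t + 1), ξ s ω :=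
    Finset.stronglyMeasurable_fun_sum _ fun s hs =>
      (hinc s).stronglyMeasurable.mono (ℱ.mono (by simp at hs; omega))
  have hw : StronglyMeasurable[ℱ t] fun ω => ∑ s ∈ range (t + 1), w s ω :=
    Finset.stronglyMeasurable_fun_sum _ fun s hs =>
      (hinc s).stronglyMeasurable_var.mono (ℱ.mono (by simp at hs; omega))
  exact continuous_exp.comp_stronglyMeasurable
    ((stronglyMeasurable_const.mul hξ).sub (stronglyMeasurable_const.mul hw))

lemma integrable_expProcess [IsFiniteMeasure μ]
    (hinc : ∀ s, IsBernsteinIncrement μ (ℱ (s - 1)) (ℱ s) b (ξ s) (w s))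
    (hθ : 0 ≤ θ) {κ : ℝ} (hκ : 0 ≤ κ) (t : ℕ) : Integrable (expProcess θ κ ξ w t) μ := by
  refine .of_bound ((stronglyAdapted_expProcess hinc κ t).mono (ℱ.le t)).aestronglyMeasurable
    (exp (θ * ((t + 1) * b))) (ae_of_all _ fun ω => ?_)
  have hξ : ∑ s ∈ range (t + 1), ξ s ω ≤ (t + 1) * b := by
    simpa using Finset.sum_le_sum fun s (_ : s ∈ range (t + 1)) =>
      (le_abs_self _).trans ((hinc s).abs_le ω)
  have hw : 0 ≤ ∑ s ∈ range (t + 1), w s ω := sum_nonneg fun s _ => (hinc s).var_nonneg ω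
  rw [expProcess, norm_eq_abs, abs_exp, exp_le_exp]
  nlinarith [mul_nonneg hκ hw]

lemma supermartingale_expProcess [IsFiniteMeasure μ]
    (hinc : ∀ s, IsBernsteinIncrement μ (ℱ (s - 1)) (ℱ s) b (ξ s) (w s))
    (hθ : 0 < θ) (hθb : θ * b < 3) :
    Supermartingale (expProcess θ (bernsteinRate b θ) ξ w) ℱ μ := by
  set κ := bernsteinRate b θ
  have hint := integrable_expProcess hinc hθ.le (bernsteinRate_nonneg hθb)
  refine supermartingale_nat (stronglyAdapted_expProcess hinc κ) hint fun t => ?_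
  set Y : Ω → ℝ := fun ω => expProcess θ κ ξ w t ω * exp (-(κ * w (t + 1) ω))
  have hY : StronglyMeasurable[ℱ t] Y :=
    (stronglyAdapted_expProcess hinc κ t).mul (continuous_exp.comp_stronglyMeasurable
      (stronglyMeasurable_const.mul (hinc (t + 1)).stronglyMeasurable_var).neg)
  have hsplit : expProcess θ κ ξ w (t + 1) = Y * fun ω => exp (θ * ξ (t + 1) ω) :=
    funext (expProcess_succ θ κ ξ w t)
  have hmgf : μ[fun ω => exp (θ * ξ (t + 1) ω)|ℱ t] ≤ᵐ[μ] fun ω => exp (κ * w (t + 1) ω) :=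
    (hinc (t + 1)).condExp_exp_le θ hθ hθb
  rw [hsplit]
  filter_upwards [condExp_mul_of_stronglyMeasurable_left hY (hsplit ▸ hint (t + 1))
    ((hinc (t + 1)).integrable_exp_mul (ℱ.le _) hθ.le), hmgf] with ω hpull hω
  rw [hpull, Pi.mul_apply]
  calc Y ω * μ[fun ω => exp (θ * ξ (t + 1) ω)|ℱ t] ω
      ≤ Y ω * exp (κ * w (t + 1) ω) :=
        mul_le_mul_of_nonneg_left hω (mul_pos (exp_pos _) (exp_pos _)).le
    _ = expProcess θ κ ξ w t ω := by
        rw [mul_assoc, ← exp_add, neg_add_cancel, exp_zero, mul_one]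

lemma integral_expProcess_le_one [IsProbabilityMeasure μ]
    (hinc : ∀ s, IsBernsteinIncrement μ (ℱ (s - 1)) (ℱ s) b (ξ s) (w s))
    (hθ : 0 < θ) (hθb : θ * b < 3) (t : ℕ) :
    ∫ ω, expProcess θ (bernsteinRate b θ) ξ w t ω ∂μ ≤ 1 := by
  have hZ := supermartingale_expProcess hinc hθ hθb
  -- `ℱ (0 - 1) = ℱ 0`, so the Bernstein bound at time `0` is a pointwise bound
  have hmgf : μ[fun ω => exp (θ * ξ 0 ω)|ℱ 0] ≤ᵐ[μ]
      fun ω => exp (bernsteinRate b θ * w 0 ω) :=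
    (hinc 0).condExp_exp_le θ hθ hθb
  rw [condExp_of_stronglyMeasurable (ℱ.le 0) (hinc 0).stronglyMeasurable_exp_mul
    ((hinc 0).integrable_exp_mul (ℱ.le 0) hθ.le)] at hmgf
  have hZ0 : expProcess θ (bernsteinRate b θ) ξ w 0 ≤ᵐ[μ] 1 := by
    filter_upwards [hmgf] with ω hω
    simpa [expProcess, exp_sub, div_le_one (exp_pos _)] using hω
  calc ∫ ω, expProcess θ (bernsteinRate b θ) ξ w t ω ∂μ
      ≤ ∫ ω, expProcess θ (bernsteinRate b θ) ξ w 0 ω ∂μ := by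
        simpa using hZ.setIntegral_le t.zero_le MeasurableSet.univ
    _ ≤ ∫ _, 1 ∂μ := integral_mono_ae (hZ.integrable 0) (integrable_const 1) hZ0
    _ = 1 := by simp

theorem measure_le_exp_neg_mul_measure_var_pos [IsProbabilityMeasure μ]
    (hinc : ∀ s, IsBernsteinIncrement μ (ℱ (s - 1)) (ℱ s) b (ξ s) (w s)) (hb : 0 ≤ b)
    {α v : ℝ} (hα : 0 < α) (hv : 0 < v) (t : ℕ) :
    μ {ω | √(2 * v * α) + α * b / 3 ≤ ∑ s ∈ range (t + 1), ξ s ω ∧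
        ∑ s ∈ range (t + 1), w s ω ≤ v}
      ≤ ENNReal.ofReal (exp (-α)) * μ {ω | 0 < ∑ s ∈ range (t + 1), w s ω} := by
  obtain ⟨θ, hθ, hθb, hθα⟩ := exists_bernsteinRate_le hb hα hv
  have hκ := bernsteinRate_nonneg hθb
  have hc : 0 < √(2 * v * α) + α * b / 3 := by
    have := sqrt_pos.2 (by positivity : 0 < 2 * v * α)
    positivity
  have hV : ∀ ω, 0 ≤ ∑ s ∈ range (t + 1), w s ω := fun ω =>
    sum_nonneg fun s _ => (hinc s).var_nonneg ω
  have hvanish := ae_sum_eq_zero_of_sum_eq_zero (fun s => (hinc s).var_nonneg)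
    (fun s => (hinc s).ae_eq_zero_of_var_eq_zero) (range (t + 1))
  have hG : MeasurableSet {ω | 0 < ∑ s ∈ range (t + 1), w s ω} :=
    measurableSet_lt measurable_const (Finset.measurable_fun_sum _ fun s _ =>
      ((hinc s).stronglyMeasurable_var.mono (ℱ.le _)).measurable)
  calc _ ≤ μ ({ω | exp α ≤ expProcess θ (bernsteinRate b θ) ξ w t ω} ∩
          {ω | 0 < ∑ s ∈ range (t + 1), w s ω}) := by
        refine measure_mono_ae ?_
        filter_upwards [hvanish] with ω hω ⟨hM, hQ⟩
        refine ⟨?_, ?_⟩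
        · rw [Set.mem_ofPred_eq, expProcess, exp_le_exp]
          nlinarith
        · by_contra hpos
          have := hω (le_antisymm (not_lt.1 hpos) (hV ω))
          linarith
    _ ≤ ENNReal.ofReal (exp α)⁻¹ * μ {ω | 0 < ∑ s ∈ range (t + 1), w s ω} := by
        refine measure_setOf_le_inter_le_of_integral_le_one
          ((supermartingale_expProcess hinc hθ hθb).integrable t) (fun ω => (exp_pos _).le)
          (integral_expProcess_le_one hinc hθ hθb t) hG ?_ (exp_pos α)
        filter_upwards [hvanish] with ω hω hpos
        have hV0 := le_antisymm (not_lt.1 hpos) (hV ω)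
        simp [expProcess, hV0, hω hV0]
    _ = _ := by rw [exp_neg]

end Freedman

lemma stronglyMeasurable_comp_of_forall_indicator {Ω ι A : Type*} [Finite ι] [Countable A]
    [DecidableEq A] {m : MeasurableSpace Ω} {Y : ι → Ω → A}
    (hY : ∀ i a, StronglyMeasurable[m] fun ω => if Y i ω = a then (1 : ℝ) else 0)
    (g : (ι → A) → ℝ) : StronglyMeasurable[m] fun ω => g fun i => Y i ω := by
  let _ : MeasurableSpace A := ⊤
  have hYm : ∀ i, Measurable (Y i) := fun i => measurable_to_countable' fun a => by
    convert (hY i a).measurable (measurableSet_singleton 1) using 1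
    ext ω
    by_cases h : Y i ω = a <;> simp [h]
  exact (Measurable.of_discrete.comp (measurable_pi_lambda _ hYm)).stronglyMeasurable

theorem stmt14_general {Ω : Type*} {m0 : MeasurableSpace Ω} (μ : Measure Ω)
    [IsProbabilityMeasure μ] (ℱ : Filtration ℕ m0)
    {A : Type*} [Fintype A] [DecidableEq A]
    (d : ℕ) (X : ℕ → Ω → A)
    (hX : ∀ t a, StronglyMeasurable[ℱ t] (fun ω => (if X t ω = a then (1 : ℝ) else 0)))
    (p : A → (Fin d → A) → ℝ)
    (hp01 : ∀ a x, 0 ≤ p a x ∧ p a x ≤ 1)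
    (hMarkov : ∀ s, d ≤ s → ∀ a,
      μ[fun ω => (if X s ω = a then (1 : ℝ) else 0) | ℱ (s - 1)]
        =ᵐ[μ] fun ω => p a (fun i => X (s - d + i) ω))
    (b : ℝ) (hb : 0 < b) (H : ℕ → Ω → ℝ)
    (hHmeas : ∀ s, StronglyMeasurable[ℱ (s - 1)] (H s))
    (hHbdd : ∀ s ω, |H s ω| ≤ b)
    (hH0 : ∀ s ≤ d, ∀ ω, H s ω = 0)
    (a : A)
    (M : ℕ → Ω → ℝ)
    (hM : ∀ t ω, M t ω = ∑ s ∈ Finset.range (t + 1),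
      H s ω * ((if X s ω = a then (1 : ℝ) else 0) - p a (fun i => X (s - d + i) ω)))
    (QV : ℕ → Ω → ℝ)
    (hQV : ∀ t ω, QV t ω = ∑ s ∈ Finset.range (t + 1),
      H s ω ^ 2 * p a (fun i => X (s - d + i) ω) * (1 - p a (fun i => X (s - d + i) ω)))
    (α v : ℝ) (hα : 0 < α) (hv : 0 < v) (t : ℕ) :
    μ {ω | Real.sqrt (2 * v * α) + α * b / 3 ≤ M t ω ∧ QV t ω ≤ v}
      ≤ ENNReal.ofReal (Real.exp (-α)) * μ {ω | 0 < QV t ω} := by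
  set I : ℕ → Ω → ℝ := fun s ω => if X s ω = a then 1 else 0
  set P : ℕ → Ω → ℝ := fun s ω => p a fun i => X (s - d + i) ω
  have hinc : ∀ s, IsBernsteinIncrement μ (ℱ (s - 1)) (ℱ s) b
      (fun ω => H s ω * (I s ω - P s ω)) (fun ω => H s ω ^ 2 * P s ω * (1 - P s ω)) := by
    intro s
    rcases le_or_gt s d with hsd | hds
    · have h0 : H s = 0 := funext (hH0 s hsd)
      simpa [h0] using IsBernsteinIncrement.zero (m' := ℱ s) (ℱ.le (s - 1)) hb.le
    · refine isBernsteinIncrement_bernoulli (ℱ.mono (Nat.sub_le s 1)) (ℱ.le s)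
        (fun ω => by by_cases h : X s ω = a <;> simp [I, h]) (hX s a) (hMarkov s hds.le a)
        (stronglyMeasurable_comp_of_forall_indicator
          (fun i a => (hX _ a).mono (ℱ.mono (by omega))) _)
        (fun ω => hp01 a _) (hHmeas s) (hHbdd s)
  simp_rw [hM, hQV]
  exact measure_le_exp_neg_mul_measure_var_pos hinc hb.le hα hv t

theorem stmt14 {Ω : Type*} {m0 : MeasurableSpace Ω} (μ : Measure Ω)
    [IsProbabilityMeasure μ] (ℱ : Filtration ℕ m0)
    {A : Type*} [Fintype A] [DecidableEq A]
    (d : ℕ) (X : ℕ → Ω → A)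
    (hX : ∀ t a, StronglyMeasurable[ℱ t] (fun ω => (if X t ω = a then (1 : ℝ) else 0)))
    (p : A → (Fin d → A) → ℝ)
    (hp01 : ∀ a x, 0 ≤ p a x ∧ p a x ≤ 1)
    (hpsum : ∀ x, ∑ a, p a x = 1)
    (hMarkov : ∀ s, d ≤ s → ∀ a,
      μ[fun ω => (if X s ω = a then (1 : ℝ) else 0) | ℱ (s - 1)]
        =ᵐ[μ] fun ω => p a (fun i => X (s - d + i) ω))
    (b : ℝ) (hb : 0 < b) (H : ℕ → Ω → ℝ)
    (hHmeas : ∀ s, StronglyMeasurable[ℱ (s - 1)] (H s))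
    (hHbdd : ∀ s ω, |H s ω| ≤ b)
    (hH0 : ∀ s ≤ d, ∀ ω, H s ω = 0)
    (a : A)
    (M : ℕ → Ω → ℝ)
    (hM : ∀ t ω, M t ω = ∑ s ∈ Finset.range (t + 1),
      H s ω * ((if X s ω = a then (1 : ℝ) else 0) - p a (fun i => X (s - d + i) ω)))
    (QV : ℕ → Ω → ℝ)
    (hQV : ∀ t ω, QV t ω = ∑ s ∈ Finset.range (t + 1),
      H s ω ^ 2 * p a (fun i => X (s - d + i) ω) * (1 - p a (fun i => X (s - d + i) ω)))
    (α v : ℝ) (hα : 0 < α) (hv : 0 < v) (t : ℕ) :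
    μ {ω | Real.sqrt (2 * v * α) + α * b / 3 ≤ M t ω ∧ QV t ω ≤ v}
      ≤ ENNReal.ofReal (Real.exp (-α)) * μ {ω | 0 < QV t ω} :=
  stmt14_general μ ℱ d X hX p hp01 hMarkov b hb H hHmeas hHbdd hH0 a M hM QV hQV α v hα hv t
end

section
/- Minimax lower bound for lag selection: with A = {0,1}, d = βn for β ∈ (0,1), if δ² ≤ ((1−λ)/(2n))(log(nβ)/2 − log 2), then inf over all lag estimators Λ̂_n based on n samples of sup over MTD models of order d with δ_min ≥ δ of P(Λ̂_n ≠ Λ) is at least 1/4. -/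
open Finset

/-- Value of a binary trajectory at an absolute time, `false` off range. -/
def getB {n : ℕ} (x : Fin n → Bool) (m : ℕ) : Bool :=
  if h : m < n then x ⟨m, h⟩ else false

/-- Transition kernel (probability of symbol `1`) of a binary MTD model of order
`d` with mixture weights `lam0, lam` and component kernels `p0, pj`. -/
noncomputable def mtdK {d : ℕ} (lam0 : ℝ) (lam : Fin d → ℝ) (p0 : ℝ)
    (pj : Fin d → Bool → ℝ) : (Fin d → Bool) → ℝ :=
  fun x => lam0 * p0 + ∑ j, lam j * pj j (x j)

/-- Oscillation of lag `j` of a binary MTD model. -/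
noncomputable def osc {d : ℕ} (lam : Fin d → ℝ) (pj : Fin d → Bool → ℝ)
    (j : Fin d) : ℝ :=
  lam j * |pj j true - pj j false|

open Classical in
/-- The set of relevant lags of a binary MTD model. -/
noncomputable def relevantLags {d : ℕ} (lam : Fin d → ℝ) (pj : Fin d → Bool → ℝ) :
    Finset (Fin d) :=
  Finset.univ.filter (fun j => 0 < osc lam pj j)

/-- `q` is the law on `X_{1:n}` of a stationary Markov chain of order `d` with
transition kernel `K` (probability of symbol `1` given the previous `d`
symbols): it is a probability vector satisfying the Markov factorization through
`K` and stationarity of `d`-windows. -/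
def IsStationaryLaw (n d : ℕ) (K : (Fin d → Bool) → ℝ)
    (q : (Fin n → Bool) → ℝ) : Prop :=
  (∀ x, 0 ≤ q x) ∧ (∑ x, q x = 1) ∧
  (∀ x, q x =
    (∑ y ∈ Finset.univ.filter (fun y => ∀ i < d, getB y i = getB x i), q y) *
    ∏ t ∈ Finset.Ico d n,
      (if getB x t then K (fun i => getB x (t - d + i))
        else 1 - K (fun i => getB x (t - d + i)))) ∧
  (∀ t, t + d ≤ n → ∀ v : Fin d → Bool,
    (∑ x ∈ Finset.univ.filter (fun x => ∀ i : Fin d, getB x (t + i) = v i), q x) =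
    (∑ x ∈ Finset.univ.filter (fun x => ∀ i : Fin d, getB x i.val = v i), q x))

/-!
For each lag `j` consider the order-`d` chain that copies the symbol `d - j` steps back through
a binary symmetric channel with bias `δ`, started from the uniform law: it is an MTD model whose
only relevant lag is `j`, with oscillation `δ`, and its law `q_j` on `{0,1}ⁿ` is an explicit
product, so that all its window marginals can be computed by summing out one symbol at a time.
Its collision probability satisfies `2ⁿ ∑ q_j² ≤ (1 + δ²)ⁿ`, which the hypothesis on `δ` bounds
by `9d/16`. If an estimator recovered every lag with probability more than `3/4`, Cauchy–Schwarz
would force each of the `d` disjoint regions `{est = {j}}` to contain more than `2ⁿ/d` sequences.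
-/

lemma exists_sum_filter_eq_le {α β ι : Type*} [Fintype α] [Fintype ι] [Nonempty ι]
    [DecidableEq β] (q : ι → α → ℝ) (e : α → β) {s : ι → β} (hs : Function.Injective s)
    {C c : ℝ} (hc : 0 ≤ c) (hq : ∀ j, ∑ x, q j x ^ 2 ≤ C)
    (hC : C * Fintype.card α ≤ c ^ 2 * Fintype.card ι) :
    ∃ j, ∑ x ∈ univ.filter (fun x => e x = s j), q j x ≤ c := by
  classical
  set A : ι → Finset α := fun j => univ.filter (fun x => e x = s j)
  by_contra! hlarge
  have hC0 : 0 ≤ C := (sum_nonneg fun _ _ => sq_nonneg _).trans (hq (Classical.arbitrary ι))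
  have hcard : ∀ j, c ^ 2 < #(A j) * C := fun j =>
    calc c ^ 2 < (∑ x ∈ A j, q j x) ^ 2 := pow_lt_pow_left₀ (hlarge j) hc two_ne_zero
      _ ≤ #(A j) * ∑ x ∈ A j, q j x ^ 2 := sq_sum_le_card_mul_sum_sq
      _ ≤ #(A j) * C := mul_le_mul_of_nonneg_left
          ((sum_le_sum_of_subset_of_nonneg (subset_univ _) fun _ _ _ => sq_nonneg _).trans
            (hq j)) (Nat.cast_nonneg _)
  have hdisjoint : (Set.univ : Set ι).PairwiseDisjoint A := fun i _ j _ hij =>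
    disjoint_filter.mpr fun x _ hi hj => hs.ne hij (hi.symm.trans hj)
  have hsum_card : ∑ j, #(A j) ≤ Fintype.card α := by
    rw [← card_biUnion (by simpa using hdisjoint)]
    exact card_le_univ _
  have : c ^ 2 * Fintype.card ι < C * Fintype.card α :=
    calc c ^ 2 * Fintype.card ι = ∑ _j : ι, c ^ 2 := by simp [mul_comm]
      _ < ∑ j, #(A j) * C := sum_lt_sum_of_nonempty univ_nonempty fun j _ => hcard j
      _ = ((∑ j, #(A j) : ℕ) : ℝ) * C := by push_cast; rw [sum_mul]
      _ ≤ Fintype.card α * C := mul_le_mul_of_nonneg_right (by exact_mod_cast hsum_card) hC0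
      _ = C * Fintype.card α := mul_comm _ _
  linarith

lemma sum_filter_true_add_sum_filter_false {α M : Type*} [Fintype α] [AddCommMonoid M]
    (f : α → M) (P : Bool → α → Prop) [∀ b, DecidablePred (P b)] (Q : α → Prop)
    [DecidablePred Q] (v : α → Bool)
    (hP : ∀ b x, P b x ↔ Q x ∧ v x = b) :
    ∑ x ∈ univ.filter (P true), f x + ∑ x ∈ univ.filter (P false), f x
      = ∑ x ∈ univ.filter Q, f x := by
  simp only [sum_filter, ← sum_add_distrib]
  refine sum_congr rfl fun x _ => ?_
  cases hv : v x <;> by_cases hQ : Q x <;> simp [hP, hv, hQ]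

section WindowMass

variable {n : ℕ}

def consSeq {α : Type*} (a : α) (w : ℕ → α) : ℕ → α
  | 0 => a
  | i + 1 => w i

def windowMass (f : (Fin n → Bool) → ℝ) (t m : ℕ) (w : ℕ → Bool) : ℝ :=
  ∑ x ∈ univ.filter (fun x => ∀ i < m, getB x (t + i) = w i), f x

lemma windowMass_zero (f : (Fin n → Bool) → ℝ) (t : ℕ) (w : ℕ → Bool) :
    windowMass f t 0 w = ∑ x, f x := by
  simp [windowMass]

lemma windowMass_full (f : (Fin n → Bool) → ℝ) (w : ℕ → Bool) :
    windowMass f 0 n w = f (fun i : Fin n => w i) := by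
  have hfilter : univ.filter (fun x : Fin n → Bool => ∀ i < n, getB x (0 + i) = w i)
      = {fun i : Fin n => w i} := by
    ext x
    simp only [mem_filter, mem_univ, true_and, mem_singleton, zero_add, funext_iff]
    exact ⟨fun h i => by simpa [getB] using h i i.isLt,
      fun h i hi => by simpa [getB, hi] using h ⟨i, hi⟩⟩
  rw [windowMass, hfilter, sum_singleton]

lemma forall_window_succ_iff (x : Fin n → Bool) (t m : ℕ) (w : ℕ → Bool) (b : Bool) :
    (∀ i < m + 1, getB x (t + i) = Function.update w m b i) ↔
      (∀ i < m, getB x (t + i) = w i) ∧ getB x (t + m) = b := by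
  constructor
  · intro h
    refine ⟨fun i hi => ?_, by simpa using h m (by omega)⟩
    simpa [Function.update_of_ne hi.ne] using h i (by omega)
  · rintro ⟨h, hm⟩ i hi
    rcases Nat.lt_succ_iff_lt_or_eq.mp hi with hi | rfl
    · simpa [Function.update_of_ne hi.ne] using h i hi
    · simpa using hm

lemma forall_window_consSeq_iff (x : Fin n → Bool) (t m : ℕ) (w : ℕ → Bool) (b : Bool) :
    (∀ i < m + 1, getB x (t + i) = consSeq b w i) ↔
      getB x t = b ∧ ∀ i < m, getB x (t + 1 + i) = w i := by
  constructor
  · intro h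
    refine ⟨h 0 (by omega), fun i hi => ?_⟩
    simpa [consSeq, Nat.add_assoc, Nat.add_comm 1 i] using h (i + 1) (by omega)
  · rintro ⟨h0, h⟩ (_ | i) hi
    · simpa [consSeq] using h0
    · simpa [consSeq, Nat.add_assoc, Nat.add_comm 1 i] using h i (by omega)

lemma windowMass_add_update (f : (Fin n → Bool) → ℝ) (t m : ℕ) (w : ℕ → Bool) :
    windowMass f t (m + 1) (Function.update w m true)
      + windowMass f t (m + 1) (Function.update w m false) = windowMass f t m w :=
  sum_filter_true_add_sum_filter_false f _ _ (fun x => getB x (t + m))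
    (fun b x => forall_window_succ_iff x t m w b)

lemma windowMass_add_consSeq (f : (Fin n → Bool) → ℝ) (t m : ℕ) (w : ℕ → Bool) :
    windowMass f t (m + 1) (consSeq true w) + windowMass f t (m + 1) (consSeq false w)
      = windowMass f (t + 1) m w :=
  sum_filter_true_add_sum_filter_false f _ _ (fun x => getB x t)
    (fun b x => (forall_window_consSeq_iff x t m w b).trans and_comm)

end WindowMass

section LagWeight

variable (g : ℕ) (c : Bool → Bool → ℝ)

noncomputable def lagFactor (w : ℕ → Bool) (t : ℕ) : ℝ :=
  if t < g then 1 / 2 else c (w t) (w (t - g))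

noncomputable def lagWeight (w : ℕ → Bool) (m : ℕ) : ℝ :=
  ∏ t ∈ range m, lagFactor g c w t

variable {g}

lemma lagFactor_congr {w w' : ℕ → Bool} {t : ℕ} (h : ∀ s ≤ t, w s = w' s) :
    lagFactor g c w t = lagFactor g c w' t := by
  simp only [lagFactor, h t le_rfl, h (t - g) (Nat.sub_le t g)]

lemma lagWeight_congr {w w' : ℕ → Bool} {m : ℕ} (h : ∀ s < m, w s = w' s) :
    lagWeight g c w m = lagWeight g c w' m :=
  prod_congr rfl fun _ ht =>
    lagFactor_congr c fun s hs => h s (hs.trans_lt (mem_range.mp ht))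

lemma lagWeight_add_update (hg : 1 ≤ g) {σ : ℝ} (hcol : ∀ b, c true b + c false b = σ)
    (w : ℕ → Bool) (m : ℕ) :
    lagWeight g c (Function.update w m true) (m + 1)
      + lagWeight g c (Function.update w m false) (m + 1)
      = lagWeight g c w m * if m < g then 1 else σ := by
  have hsucc : ∀ b, lagWeight g c (Function.update w m b) (m + 1)
      = lagWeight g c w m * if m < g then 1 / 2 else c b (w (m - g)) := by
    intro b
    rw [lagWeight, prod_range_succ, ← lagWeight,
      lagWeight_congr c fun s hs => Function.update_of_ne hs.ne _ _]
    unfold lagFactor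
    split_ifs
    · rfl
    · rw [Function.update_self, Function.update_of_ne (by omega)]
  rw [hsucc, hsucc, ← mul_add]
  split_ifs
  · norm_num
  · rw [hcol]

lemma lagFactor_consSeq_succ (hg : 1 ≤ g) (b : Bool) (w : ℕ → Bool) (i : ℕ) :
    lagFactor g c (consSeq b w) (i + 1)
      = lagFactor g c w i * if g - 1 = i then 2 * c (w i) b else 1 := by
  unfold lagFactor
  rcases lt_trichotomy (i + 1) g with hi | hi | hi
  · rw [if_pos hi, if_pos (by omega), if_neg (by omega), mul_one]
  · subst hi
    simp [consSeq]
  · rw [if_neg (by omega), if_neg (by omega), if_neg (by omega), mul_one,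
      show i + 1 - g = (i - g) + 1 by omega]
    rfl

/-- The uniform law is invariant for the lag-`g` chain, so the first symbol can be summed out. -/
lemma lagWeight_add_consSeq (hg : 1 ≤ g) (hrow : ∀ a, c a true + c a false = 1)
    (w : ℕ → Bool) (m : ℕ) :
    lagWeight g c (consSeq true w) (m + 1) + lagWeight g c (consSeq false w) (m + 1)
      = lagWeight g c w m := by
  have hcons : ∀ b, lagWeight g c (consSeq b w) (m + 1)
      = lagWeight g c w m / 2 * if g - 1 < m then 2 * c (w (g - 1)) b else 1 := by
    intro b
    rw [lagWeight, prod_range_succ', lagFactor, if_pos (by omega)]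
    simp only [lagFactor_consSeq_succ c hg, prod_mul_distrib, prod_ite_eq, mem_range]
    rw [← lagWeight]
    ring
  rw [hcons, hcons, ← mul_add]
  split_ifs
  · rw [← mul_add, hrow]
    ring
  · ring

end LagWeight

section LagMarginals

variable {n g : ℕ} (c : Bool → Bool → ℝ)

lemma lagWeight_getB (w : ℕ → Bool) :
    lagWeight g c (getB (fun i : Fin n => w i)) n = lagWeight g c w n :=
  lagWeight_congr c fun _ hs => dif_pos hs

lemma windowMass_lagWeight_prefix (hg : 1 ≤ g) {σ : ℝ} (hcol : ∀ b, c true b + c false b = σ)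
    {m : ℕ} (hm : m ≤ n) (w : ℕ → Bool) :
    windowMass (fun x : Fin n → Bool => lagWeight g c (getB x) n) 0 m w
      = lagWeight g c w m * ∏ t ∈ Ico m n, if t < g then 1 else σ := by
  obtain ⟨k, hk⟩ := Nat.exists_eq_add_of_le hm
  induction k generalizing m w with
  | zero =>
    subst hk
    rw [windowMass_full, lagWeight_getB, Ico_self, prod_empty, mul_one]
  | succ k ih =>
    rw [← windowMass_add_update, ih (by omega) _ (by omega), ih (by omega) _ (by omega),
      ← add_mul, lagWeight_add_update c hg hcol, prod_eq_prod_Ico_succ_bot (show m < n by omega),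
      mul_assoc]

lemma windowMass_lagWeight (hg : 1 ≤ g) (hcol : ∀ b, c true b + c false b = 1)
    (hrow : ∀ a, c a true + c a false = 1) {t m : ℕ} (h : t + m ≤ n) (w : ℕ → Bool) :
    windowMass (fun x : Fin n → Bool => lagWeight g c (getB x) n) t m w = lagWeight g c w m := by
  induction t generalizing m w with
  | zero =>
    rw [windowMass_lagWeight_prefix c hg hcol (by omega)]
    simp only [ite_self, prod_const_one, mul_one]
  | succ t ih =>
    rw [← windowMass_add_consSeq, ih (by omega), ih (by omega), lagWeight_add_consSeq c hg hrow]

end LagMarginals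

section LagCopyLaw

noncomputable def noisyCopy (δ : ℝ) (a b : Bool) : ℝ :=
  if a = b then (1 + δ) / 2 else (1 - δ) / 2

lemma noisyCopy_true_add_false_left (δ : ℝ) (b : Bool) :
    noisyCopy δ true b + noisyCopy δ false b = 1 := by
  cases b <;> simp [noisyCopy] <;> ring

lemma noisyCopy_true_add_false_right (δ : ℝ) (a : Bool) :
    noisyCopy δ a true + noisyCopy δ a false = 1 := by
  cases a <;> simp [noisyCopy] <;> ring

lemma noisyCopy_nonneg {δ : ℝ} (hδ : |δ| ≤ 1) (a b : Bool) : 0 ≤ noisyCopy δ a b := by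
  rw [abs_le] at hδ
  unfold noisyCopy
  split_ifs <;> linarith

lemma noisyCopy_le_one {δ : ℝ} (hδ : |δ| ≤ 1) (a b : Bool) : noisyCopy δ a b ≤ 1 := by
  rw [abs_le] at hδ
  unfold noisyCopy
  split_ifs <;> linarith

lemma ite_noisyCopy_true (δ : ℝ) (a b : Bool) :
    (if a then noisyCopy δ true b else 1 - noisyCopy δ true b) = noisyCopy δ a b := by
  cases a <;> cases b <;> simp [noisyCopy] <;> ring

/-- The law of `n` steps of the order-`g` chain that copies the symbol `g` steps back through
a binary symmetric channel, started from the uniform law. -/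
noncomputable def lagCopyLaw (n g : ℕ) (δ : ℝ) (x : Fin n → Bool) : ℝ :=
  lagWeight g (noisyCopy δ) (getB x) n

lemma lagCopyLaw_nonneg {n g : ℕ} {δ : ℝ} (hδ : |δ| ≤ 1) (x : Fin n → Bool) :
    0 ≤ lagCopyLaw n g δ x := by
  unfold lagCopyLaw lagWeight
  refine prod_nonneg fun _ _ => ?_
  unfold lagFactor
  split_ifs
  · norm_num
  · exact noisyCopy_nonneg hδ _ _

lemma windowMass_lagCopyLaw {n g : ℕ} (hg : 1 ≤ g) (δ : ℝ) {t m : ℕ} (h : t + m ≤ n)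
    (w : ℕ → Bool) : windowMass (lagCopyLaw n g δ) t m w = lagWeight g (noisyCopy δ) w m :=
  windowMass_lagWeight _ hg (noisyCopy_true_add_false_left δ)
    (noisyCopy_true_add_false_right δ) h w

lemma forall_fin_iff_getB {n d : ℕ} (x : Fin n → Bool) (t : ℕ) (v : Fin d → Bool) :
    (∀ i : Fin d, getB x (t + i) = v i) ↔ ∀ i < d, getB x (t + i) = getB v i := by
  simp only [Fin.forall_iff, getB]
  exact forall₂_congr fun i hi => by rw [dif_pos hi]

theorem isStationaryLaw_lagCopyLaw {n d : ℕ} (hdn : d ≤ n) {δ : ℝ} (hδ : |δ| ≤ 1) (j : Fin d)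
    {K : (Fin d → Bool) → ℝ} (hK : ∀ y, K y = noisyCopy δ true (y j)) :
    IsStationaryLaw n d K (lagCopyLaw n (d - j) δ) := by
  have hg : 1 ≤ d - j := by omega
  refine ⟨lagCopyLaw_nonneg hδ, ?_, fun x => ?_, fun t ht v => ?_⟩
  · rw [← windowMass_zero _ 0 fun _ => false, windowMass_lagCopyLaw hg δ (Nat.zero_le n)]
    exact prod_range_zero _
  · have hwindow := windowMass_lagCopyLaw hg δ (t := 0) (by omega : 0 + d ≤ n) (getB x)
    simp only [windowMass, zero_add] at hwindow
    rw [hwindow, lagCopyLaw, lagWeight, lagWeight, ← prod_range_mul_prod_Ico _ hdn]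
    refine congrArg _ (prod_congr rfl fun s hs => ?_)
    rw [mem_Ico] at hs
    rw [hK, lagFactor, if_neg (by omega), show s - d + j = s - (d - j) by omega,
      ite_noisyCopy_true]
  · have hshift := windowMass_lagCopyLaw hg δ ht (getB v)
    have hstart := windowMass_lagCopyLaw hg δ (by omega : 0 + d ≤ n) (getB v)
    simp only [windowMass, ← forall_fin_iff_getB] at hshift hstart
    simp only [zero_add] at hstart
    rw [hshift, hstart]

lemma sum_sq_lagCopyLaw_le {n g : ℕ} (hg : 1 ≤ g) (δ : ℝ) :
    ∑ x, lagCopyLaw n g δ x ^ 2 ≤ (1 + δ ^ 2) ^ n / 2 ^ n := by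
  set c : Bool → Bool → ℝ := fun a b => 2 * noisyCopy δ a b ^ 2
  have hcol : ∀ b, c true b + c false b = 1 + δ ^ 2 := by
    intro b
    cases b <;> simp [c, noisyCopy] <;> ring
  have hsq : ∀ x : Fin n → Bool, 2 ^ n * lagCopyLaw n g δ x ^ 2 = lagWeight g c (getB x) n := by
    intro x
    rw [lagCopyLaw, lagWeight, lagWeight, ← prod_pow]
    nth_rw 1 [← card_range n]
    rw [pow_card_mul_prod]
    refine prod_congr rfl fun t _ => ?_
    unfold lagFactor
    split_ifs
    · norm_num
    · rfl
  have hweight : ∑ x : Fin n → Bool, lagWeight g c (getB x) n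
      = ∏ t ∈ Ico 0 n, if t < g then 1 else 1 + δ ^ 2 := by
    rw [← windowMass_zero _ 0 fun _ => false,
      windowMass_lagWeight_prefix c hg hcol (Nat.zero_le n)]
    exact one_mul _
  rw [le_div_iff₀ (by positivity), mul_comm, mul_sum, sum_congr rfl fun x _ => hsq x, hweight]
  calc ∏ t ∈ Ico 0 n, (if t < g then 1 else 1 + δ ^ 2)
      ≤ ∏ _t ∈ Ico 0 n, (1 + δ ^ 2) :=
        prod_le_prod (fun _ _ => by positivity) fun _ _ => by
          split_ifs
          · nlinarith [sq_nonneg δ]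
          · rfl
    _ = (1 + δ ^ 2) ^ n := by rw [prod_const, Nat.card_Ico, Nat.sub_zero]

end LagCopyLaw

section Numerics

open Real

variable {n : ℕ} {L lam δ : ℝ}

lemma log_gap_pos_of_sq_le (hn : 0 < n) (hlam1 : lam < 1) (hδ0 : 0 < δ)
    (hδ : δ ^ 2 ≤ (1 - lam) / (2 * n) * (L / 2 - log 2)) : 0 < L / 2 - log 2 :=
  pos_of_mul_pos_right ((pow_pos hδ0 2).trans_le hδ)
    (div_nonneg (by linarith) (by positivity))

lemma mul_sq_le_of_sq_le (hlam : 0 ≤ lam) (hgap : 0 ≤ L / 2 - log 2)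
    (hδ : δ ^ 2 ≤ (1 - lam) / (2 * n) * (L / 2 - log 2)) :
    n * δ ^ 2 ≤ (L / 2 - log 2) / 2 := by
  rcases n.eq_zero_or_pos with rfl | hn
  · simp only [Nat.cast_zero, zero_mul]
    linarith
  calc n * δ ^ 2 ≤ n * ((1 - lam) / (2 * n) * (L / 2 - log 2)) :=
        mul_le_mul_of_nonneg_left hδ n.cast_nonneg
    _ = (1 - lam) * (L / 2 - log 2) / 2 := by field_simp
    _ ≤ (L / 2 - log 2) / 2 := by nlinarith

lemma one_lt_of_log_gap_pos {x : ℝ} (hx : 0 ≤ x) (hgap : 0 < log x / 2 - log 2) : 1 < x :=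
  (log_pos_iff hx).mp (by linarith [log_pos one_lt_two])

lemma abs_le_one_of_mul_sq_le {d : ℕ} (hd : d < n) (h : n * δ ^ 2 ≤ (log d / 2 - log 2) / 2) :
    |δ| ≤ 1 := by
  have hlog : log d ≤ d := log_le_self d.cast_nonneg
  have hdn : (d : ℝ) < n := by exact_mod_cast hd
  rw [← sq_le_one_iff_abs_le_one]
  nlinarith [log_pos one_lt_two, sq_nonneg δ]

/-- The constant `9/16 = (3/4)²` is what leaves error probability `1/4`. -/
lemma one_add_sq_pow_le {d : ℕ} (hgap : 0 < log d / 2 - log 2)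
    (h : n * δ ^ 2 ≤ (log d / 2 - log 2) / 2) : (1 + δ ^ 2) ^ n ≤ 9 / 16 * d := by
  have hd : (0 : ℝ) < d := one_pos.trans (one_lt_of_log_gap_pos d.cast_nonneg hgap)
  calc (1 + δ ^ 2) ^ n ≤ exp (δ ^ 2) ^ n :=
        pow_le_pow_left₀ (by positivity) (by linarith [add_one_le_exp (δ ^ 2)]) n
    _ = exp (n * δ ^ 2) := (exp_nat_mul _ _).symm
    _ ≤ exp (log d - log 2) := exp_le_exp.mpr (by linarith [log_pos one_lt_two])
    _ = d / 2 := by rw [exp_sub, exp_log hd, exp_log two_pos]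
    _ ≤ 9 / 16 * d := by linarith

end Numerics

section SingleLagModel

variable {d : ℕ} (δ : ℝ) (j : Fin d)

lemma mtdK_single (y : Fin d → Bool) :
    mtdK 0 (Pi.single j 1) (1 / 2) (fun _ => noisyCopy δ true) y = noisyCopy δ true (y j) := by
  simp [mtdK, Pi.single_apply]

lemma osc_single (k : Fin d) :
    osc (Pi.single j 1) (fun _ => noisyCopy δ true) k = (Pi.single j |δ| : Fin d → ℝ) k := by
  have hosc : noisyCopy δ true true - noisyCopy δ true false = δ := by
    simp only [noisyCopy]
    norm_num
    ring
  rcases eq_or_ne k j with rfl | hk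
  · simp [osc, hosc]
  · simp [osc, hk]

lemma relevantLags_single {δ : ℝ} (hδ : δ ≠ 0) :
    relevantLags (Pi.single j 1) (fun _ => noisyCopy δ true) = {j} := by
  ext k
  rcases eq_or_ne k j with rfl | hk
  · simp [relevantLags, osc_single, hδ]
  · simp [relevantLags, osc_single, hk]

end SingleLagModel

open Classical in
theorem stmt18_general (β : ℝ)
    (n d : ℕ) (hdn : (d : ℝ) = β * n) (hd : d < n)
    (lam : ℝ) (hlam : 0 < lam) (hlam1 : lam < 1)
    (δ : ℝ) (hδpos : 0 < δ)
    (hδ : δ ^ 2 ≤ ((1 - lam) / (2 * n)) * (Real.log (n * β) / 2 - Real.log 2))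
    (est : (Fin n → Bool) → Finset (Fin d)) :
    ∃ (lam0 : ℝ) (lamv : Fin d → ℝ) (p0 : ℝ) (pj : Fin d → Bool → ℝ)
      (q : (Fin n → Bool) → ℝ),
      0 ≤ lam0 ∧ (∀ j, 0 ≤ lamv j) ∧ lam0 + ∑ j, lamv j = 1 ∧
      0 ≤ p0 ∧ p0 ≤ 1 ∧ (∀ j bb, 0 ≤ pj j bb ∧ pj j bb ≤ 1) ∧
      IsStationaryLaw n d (mtdK lam0 lamv p0 pj) q ∧
      (relevantLags lamv pj).Nonempty ∧
      (∀ j ∈ relevantLags lamv pj, δ ≤ osc lamv pj j) ∧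
      (1 / 4 : ℝ) ≤
        ∑ x ∈ Finset.univ.filter (fun x => est x ≠ relevantLags lamv pj), q x := by
  rw [show (n : ℝ) * β = d by rw [hdn, mul_comm]] at hδ
  have hgap := log_gap_pos_of_sq_le (by omega) hlam1 hδpos hδ
  have hnδ := mul_sq_le_of_sq_le hlam.le hgap.le hδ
  have hδ1 := abs_le_one_of_mul_sq_le hd hnδ
  have hd1 : 1 < d := by exact_mod_cast one_lt_of_log_gap_pos d.cast_nonneg hgap
  have : Nonempty (Fin d) := ⟨⟨0, by omega⟩⟩
  obtain ⟨j, hj⟩ := exists_sum_filter_eq_le (fun j : Fin d => lagCopyLaw n (d - j) δ) est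
    Finset.singleton_injective (by norm_num : (0 : ℝ) ≤ 3 / 4)
    (fun j => sum_sq_lagCopyLaw_le (by omega) δ) (by
      rw [Fintype.card_fun, Fintype.card_bool, Fintype.card_fin, Fintype.card_fin]
      push_cast
      rw [div_mul_cancel₀ _ (by positivity)]
      linarith [one_add_sq_pow_le hgap hnδ])
  have hlaw := isStationaryLaw_lagCopyLaw hd.le hδ1 j (mtdK_single δ j)
  refine ⟨0, Pi.single j 1, 1 / 2, fun _ => noisyCopy δ true, _, le_rfl,
    (Pi.single_nonneg.mpr zero_le_one : (0 : Fin d → ℝ) ≤ Pi.single j 1), by simp,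
    by norm_num, by norm_num,
    fun _ b => ⟨noisyCopy_nonneg hδ1 _ b, noisyCopy_le_one hδ1 _ b⟩, hlaw, ?_, ?_, ?_⟩ <;>
    rw [relevantLags_single j hδpos.ne']
  · exact singleton_nonempty j
  · intro k hk
    rw [mem_singleton.mp hk, osc_single, Pi.single_eq_same, abs_of_pos hδpos]
  · have htotal := sum_filter_add_sum_filter_not univ (fun x => est x = {j})
      (lagCopyLaw n (d - j) δ)
    rw [hlaw.2.1] at htotal
    simp only [ne_eq]
    linarith

open Classical in
theorem stmt18 (β : ℝ) (hβ : 0 < β) (hβ1 : β < 1)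
    (n d : ℕ) (hn : 0 < n) (hdn : (d : ℝ) = β * n) (hd : d < n)
    (lam : ℝ) (hlam : 0 < lam) (hlam1 : lam < 1)
    (δ : ℝ) (hδpos : 0 < δ)
    (hδ : δ ^ 2 ≤ ((1 - lam) / (2 * n)) * (Real.log (n * β) / 2 - Real.log 2))
    (est : (Fin n → Bool) → Finset (Fin d)) :
    ∃ (lam0 : ℝ) (lamv : Fin d → ℝ) (p0 : ℝ) (pj : Fin d → Bool → ℝ)
      (q : (Fin n → Bool) → ℝ),
      0 ≤ lam0 ∧ (∀ j, 0 ≤ lamv j) ∧ lam0 + ∑ j, lamv j = 1 ∧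
      0 ≤ p0 ∧ p0 ≤ 1 ∧ (∀ j bb, 0 ≤ pj j bb ∧ pj j bb ≤ 1) ∧
      IsStationaryLaw n d (mtdK lam0 lamv p0 pj) q ∧
      (relevantLags lamv pj).Nonempty ∧
      (∀ j ∈ relevantLags lamv pj, δ ≤ osc lamv pj j) ∧
      (1 / 4 : ℝ) ≤
        ∑ x ∈ Finset.univ.filter (fun x => est x ≠ relevantLags lamv pj), q x :=
  stmt18_general β n d hdn hd lam hlam hlam1 δ hδpos hδ est
end
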